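/- arXiv:1312.4778 — 7 statements merged into one kernel-verified Lean document; each statement's English description precedes it below -/
import Mathlib

section
/- Let n ≥ 3 and 0 < r < r_crit. Then the equation z^(n−1)/(z^n − r^n) = conj(z) has exactly 3n+1 complex solutions, namely z = 0 together with 3n points of the form r₁ e^{i(2k+1)π/n}, r₂ e^{i(2k+1)π/n}, r₃ e^{i·2kπ/n} for k = 0,…,n−1, where 0 < r₁ < r₂ < 1 < r₃ are real numbers. -/
/-!
For `z ≠ 0`, multiplying the equation by `z` turns it into `(|z|² - 1) z^n = |z|² r^n`.
Taking moduli, `ρ = |z|` solves `ρ^(n-2) |ρ² - 1| = r^n`, and then `z^n = -ρ^n` if `ρ < 1`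
and `z^n = ρ^n` if `ρ > 1`. The left-hand side increases on `[0, s]`, decreases on `[s, 1]`
and increases on `[1, ∞)`, where `s = √((n-2)/n)` is its critical point and `r_crit^n` its
value there. So for `r < r_crit` there are exactly three radii `r₁ < s < r₂ < 1 < r₃`, and each
contributes the `n` distinct `n`-th roots of `-r₁^n`, `-r₂^n`, `r₃^n` respectively.
-/

open Complex

section RadialProfile

open Set

def radialProfile (m : ℕ) (ρ : ℝ) : ℝ := ρ ^ m * |ρ ^ 2 - 1|

variable {m : ℕ} {s : ℝ}

theorem continuous_radialProfile (m : ℕ) : Continuous (radialProfile m) := by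
  unfold radialProfile; fun_prop

theorem radialProfile_nonneg {ρ : ℝ} (hρ : 0 ≤ ρ) : 0 ≤ radialProfile m ρ :=
  mul_nonneg (pow_nonneg hρ m) (abs_nonneg _)

theorem radialProfile_of_le_one {ρ : ℝ} (h₀ : 0 ≤ ρ) (h₁ : ρ ≤ 1) :
    radialProfile m ρ = ρ ^ m * (1 - ρ ^ 2) := by
  rw [radialProfile, abs_of_nonpos (by nlinarith), neg_sub]

theorem radialProfile_of_one_le {ρ : ℝ} (h₁ : 1 ≤ ρ) :
    radialProfile m ρ = ρ ^ m * (ρ ^ 2 - 1) := by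
  rw [radialProfile, abs_of_nonneg (by nlinarith)]

theorem hasDerivAt_pow_mul_one_sub_sq (hm : m ≠ 0) (x : ℝ) :
    HasDerivAt (fun x : ℝ => x ^ m * (1 - x ^ 2)) (x ^ (m - 1) * (m - (m + 2) * x ^ 2)) x := by
  refine ((hasDerivAt_pow m x).fun_mul
    ((hasDerivAt_const x 1).fun_sub (hasDerivAt_pow 2 x))).congr_deriv ?_
  obtain ⟨k, rfl⟩ := Nat.exists_eq_add_one_of_ne_zero hm
  push_cast [Nat.add_sub_cancel]
  ring

theorem strictMonoOn_radialProfile_Icc_zero (hm : m ≠ 0) (hs : (m + 2) * s ^ 2 = m) :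
    StrictMonoOn (radialProfile m) (Icc 0 s) := by
  have hs₁ : s ^ 2 < 1 := by nlinarith [(by positivity : (0 : ℝ) < m + 2)]
  refine StrictMonoOn.congr (f₁ := fun x : ℝ => x ^ m * (1 - x ^ 2)) ?_
    fun x hx => (radialProfile_of_le_one hx.1 (by nlinarith [hx.1, hx.2])).symm
  refine strictMonoOn_of_deriv_pos (convex_Icc 0 s) (by fun_prop) fun x hx => ?_
  rw [interior_Icc] at hx
  rw [(hasDerivAt_pow_mul_one_sub_sq hm x).deriv]
  have : ((m : ℝ) + 2) * x ^ 2 < m := by nlinarith [hx.1, hx.2]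
  exact mul_pos (pow_pos hx.1 _) (by linarith)

theorem strictAntiOn_radialProfile_Icc_one (hm : m ≠ 0) (hs₀ : 0 ≤ s)
    (hs : (m + 2) * s ^ 2 = m) : StrictAntiOn (radialProfile m) (Icc s 1) := by
  refine StrictAntiOn.congr (f₁ := fun x : ℝ => x ^ m * (1 - x ^ 2)) ?_
    fun x hx => (radialProfile_of_le_one (hs₀.trans hx.1) hx.2).symm
  refine strictAntiOn_of_deriv_neg (convex_Icc s 1) (by fun_prop) fun x hx => ?_
  rw [interior_Icc] at hx
  rw [(hasDerivAt_pow_mul_one_sub_sq hm x).deriv]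
  have : (m : ℝ) < (m + 2) * x ^ 2 := by nlinarith [mul_self_lt_mul_self hs₀ hx.1]
  exact mul_neg_of_pos_of_neg (pow_pos (hs₀.trans_lt hx.1) _) (by linarith)

theorem strictMonoOn_radialProfile_Ici_one : StrictMonoOn (radialProfile m) (Ici 1) := by
  intro x (hx : 1 ≤ x) y (hy : 1 ≤ y) hxy
  rw [radialProfile_of_one_le hx, radialProfile_of_one_le hy]
  calc x ^ m * (x ^ 2 - 1) ≤ y ^ m * (x ^ 2 - 1) :=
        mul_le_mul_of_nonneg_right (pow_le_pow_left₀ (by linarith) hxy.le m) (by nlinarith)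
    _ < y ^ m * (y ^ 2 - 1) :=
        mul_lt_mul_of_pos_left (by nlinarith) (pow_pos (by linarith) m)

theorem exists_radialProfile_eq_iff (hm : m ≠ 0) (hs₀ : 0 ≤ s) (hs : (m + 2) * s ^ 2 = m)
    {c : ℝ} (hc : 0 < c) (hcs : c < radialProfile m s) :
    ∃ r₁ r₂ r₃ : ℝ, 0 < r₁ ∧ r₁ < r₂ ∧ r₂ < 1 ∧ 1 < r₃ ∧
      ∀ ρ : ℝ, 0 ≤ ρ → (radialProfile m ρ = c ↔ ρ = r₁ ∨ ρ = r₂ ∨ ρ = r₃) := by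
  have hs₁ : s ≤ 1 := by
    have : s ^ 2 ≤ 1 := by nlinarith [(by positivity : (0 : ℝ) < m + 2)]
    nlinarith
  have hcont : ∀ a b, ContinuousOn (radialProfile m) (Icc a b) :=
    fun _ _ => (continuous_radialProfile m).continuousOn
  have h0 : radialProfile m 0 = 0 := by simp [radialProfile, hm]
  have h1 : radialProfile m 1 = 0 := by simp [radialProfile]
  obtain ⟨r₁, ⟨hr₁₀, hr₁s⟩, hr₁⟩ :=
    intermediate_value_Ioo hs₀ (hcont _ _) (by rw [h0]; exact ⟨hc, hcs⟩)
  obtain ⟨r₂, ⟨hr₂s, hr₂₁⟩, hr₂⟩ :=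
    intermediate_value_Ioo' hs₁ (hcont _ _) (by rw [h1]; exact ⟨hc, hcs⟩)
  have hc₃ : c ≤ radialProfile m (1 + c) := by
    rw [radialProfile_of_one_le (by linarith)]
    have h := one_le_pow₀ (M₀ := ℝ) (n := m) (by linarith : 1 ≤ 1 + c)
    nlinarith [mul_le_mul_of_nonneg_right h (by nlinarith : 0 ≤ (1 + c) ^ 2 - 1)]
  obtain ⟨r₃, ⟨hr₃₁, -⟩, hr₃⟩ :=
    intermediate_value_Ioc (by linarith : (1 : ℝ) ≤ 1 + c) (hcont _ _)
      (by rw [h1]; exact ⟨hc, hc₃⟩)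
  refine ⟨r₁, r₂, r₃, hr₁₀, hr₁s.trans hr₂s, hr₂₁, hr₃₁, fun ρ hρ => ⟨fun hρc => ?_, ?_⟩⟩
  · rcases le_total ρ s with hρs | hsρ
    · exact .inl ((strictMonoOn_radialProfile_Icc_zero hm hs).injOn ⟨hρ, hρs⟩
        ⟨hr₁₀.le, hr₁s.le⟩ (hρc.trans hr₁.symm))
    rcases le_total ρ 1 with hρ₁ | h1ρ
    · exact .inr (.inl ((strictAntiOn_radialProfile_Icc_one hm hs₀ hs).injOn ⟨hsρ, hρ₁⟩
        ⟨hr₂s.le, hr₂₁.le⟩ (hρc.trans hr₂.symm)))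
    · exact .inr (.inr (strictMonoOn_radialProfile_Ici_one.injOn h1ρ
        (mem_Ici.2 hr₃₁.le) (hρc.trans hr₃.symm)))
  · rintro (rfl | rfl | rfl) <;> assumption

end RadialProfile

section NthRoots

open Polynomial Finset

variable {R : Type*} [CommRing R] [IsDomain R] {n : ℕ} {ζ : R}

theorem IsPrimitiveRoot.setOf_exists_eq_pow_mul (hζ : IsPrimitiveRoot ζ n) (hn : 0 < n)
    (α : R) : {z | ∃ k < n, z = ζ ^ k * α} = {z | z ^ n = α ^ n} := by
  ext z
  change _ ↔ z ^ n = α ^ n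
  rw [← mem_nthRoots hn, hζ.nthRoots_eq rfl]
  simp [eq_comm]

theorem IsPrimitiveRoot.card_nthRootsFinset_of_ne_zero (hζ : IsPrimitiveRoot ζ n) {a : R}
    (ha : a ≠ 0) (h : ∃ α, α ^ n = a) : #(nthRootsFinset n a) = n := by
  classical
  rw [nthRootsFinset_def, Multiset.toFinset_card_of_nodup (hζ.nthRoots_nodup ha),
    hζ.card_nthRoots, if_pos h]

theorem disjoint_nthRootsFinset (hn : 0 < n) {a b : R} (hab : a ≠ b) :
    Disjoint (nthRootsFinset n a) (nthRootsFinset n b) :=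
  disjoint_left.2 fun _ ha hb =>
    hab (((mem_nthRootsFinset hn a).1 ha).symm.trans ((mem_nthRootsFinset hn b).1 hb))

theorem Complex.card_nthRootsFinset (hn : n ≠ 0) {a : ℂ} (ha : a ≠ 0) :
    #(nthRootsFinset n a) = n :=
  (isPrimitiveRoot_exp n hn).card_nthRootsFinset_of_ne_zero ha
    (IsAlgClosed.exists_pow_nat_eq a (Nat.pos_of_ne_zero hn))

theorem Complex.ncard_zero_union_setOf_pow_eq (hn : n ≠ 0) {a b d : ℂ} (ha : a ≠ 0)
    (hb : b ≠ 0) (hd : d ≠ 0) (hab : a ≠ b) (had : a ≠ d) (hbd : b ≠ d) :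
    ({0} ∪ {z : ℂ | z ^ n = a} ∪ {z | z ^ n = b} ∪ {z | z ^ n = d}).ncard = 3 * n + 1 := by
  classical
  have hn' := Nat.pos_of_ne_zero hn
  have h0 : ∀ {x : ℂ}, x ≠ 0 → Disjoint {0} (nthRootsFinset n x) := fun hx =>
    disjoint_singleton_left.2 fun h => hx ((mem_nthRootsFinset hn' _).1 h ▸ zero_pow hn)
  rw [← nthRootsFinset_toSet hn', ← nthRootsFinset_toSet hn', ← nthRootsFinset_toSet hn',
    ← coe_singleton, ← coe_union, ← coe_union, ← coe_union, Set.ncard_coe_finset,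
    card_union_of_disjoint (disjoint_union_left.2 ⟨disjoint_union_left.2 ⟨h0 hd,
      disjoint_nthRootsFinset hn' had⟩, disjoint_nthRootsFinset hn' hbd⟩),
    card_union_of_disjoint (disjoint_union_left.2 ⟨h0 hb, disjoint_nthRootsFinset hn' hab⟩),
    card_union_of_disjoint (h0 ha), card_singleton, card_nthRootsFinset hn ha,
    card_nthRootsFinset hn hb, card_nthRootsFinset hn hd]
  ring

end NthRoots

section Circles

variable {n : ℕ}

theorem exp_two_mul_pi_div_pow (k : ℕ) :
    exp (((2 * (k : ℝ) * Real.pi / n : ℝ) : ℂ) * I) = exp (2 * Real.pi * I / n) ^ k := by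
  rw [← exp_nat_mul]
  push_cast
  ring_nf

theorem setOf_exists_eq_mul_exp_two_mul_pi (hn : n ≠ 0) (ρ : ℝ) :
    {z : ℂ | ∃ k < n, z = ρ * exp (((2 * (k : ℝ) * Real.pi / n : ℝ) : ℂ) * I)} =
      {z | z ^ n = (ρ : ℂ) ^ n} := by
  simp_rw [exp_two_mul_pi_div_pow, mul_comm (ρ : ℂ)]
  exact (isPrimitiveRoot_exp n hn).setOf_exists_eq_pow_mul (Nat.pos_of_ne_zero hn) _

theorem setOf_exists_eq_mul_exp_odd_mul_pi (hn : n ≠ 0) (ρ : ℝ) :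
    {z : ℂ | ∃ k < n, z = ρ * exp ((((2 * (k : ℝ) + 1) * Real.pi / n : ℝ) : ℂ) * I)} =
      {z | z ^ n = -(ρ : ℂ) ^ n} := by
  have hα : ((ρ : ℂ) * exp (Real.pi * I / n)) ^ n = -(ρ : ℂ) ^ n := by
    rw [mul_pow, ← exp_nat_mul, mul_div_cancel₀ _ (Nat.cast_ne_zero.2 hn), exp_pi_mul_I]
    ring
  have hodd : ∀ k : ℕ, (ρ : ℂ) * exp ((((2 * (k : ℝ) + 1) * Real.pi / n : ℝ) : ℂ) * I) =
      exp (2 * Real.pi * I / n) ^ k * (ρ * exp (Real.pi * I / n)) := fun k => by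
    rw [← exp_two_mul_pi_div_pow, mul_left_comm, ← exp_add]
    push_cast
    ring_nf
  simp_rw [hodd, ← hα]
  exact (isPrimitiveRoot_exp n hn).setOf_exists_eq_pow_mul (Nat.pos_of_ne_zero hn) _

end Circles

section Solutions

open ComplexConjugate

variable {n : ℕ}

theorem div_eq_conj_iff_of_ne_zero (hn : n ≠ 0) {c z : ℂ} (hc : c ≠ 0) (hz : z ≠ 0) :
    (z ^ n ≠ c ∧ z ^ (n - 1) / (z ^ n - c) = conj z) ↔
      ((‖z‖ : ℂ) ^ 2 - 1) * z ^ n = ‖z‖ ^ 2 * c := by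
  have hzz : z * z ^ (n - 1) = z ^ n := by rw [← pow_succ', Nat.sub_add_cancel (by omega)]
  have hconj : ∀ w : ℂ, z * (conj z * w) = ‖z‖ ^ 2 * w := fun w => by
    rw [← mul_assoc, mul_conj']
  constructor
  · rintro ⟨hne, h⟩
    rw [div_eq_iff (sub_ne_zero.2 hne)] at h
    have hzn : z ^ n = ‖z‖ ^ 2 * (z ^ n - c) := by conv_lhs => rw [← hzz, h, hconj]
    linear_combination -hzn
  · intro h
    have hne : z ^ n ≠ c := fun hzc => hc (by rw [hzc] at h; linear_combination -h)
    refine ⟨hne, (div_eq_iff (sub_ne_zero.2 hne)).2 (mul_left_cancel₀ hz ?_)⟩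
    rw [hzz, hconj]
    linear_combination -h

theorem sq_norm_sub_one_mul_pow_eq_iff (hn : 2 ≤ n) {c : ℝ} (hc : 0 < c) {z : ℂ} (hz : z ≠ 0) :
    ((‖z‖ : ℂ) ^ 2 - 1) * z ^ n = ‖z‖ ^ 2 * c ↔ radialProfile (n - 2) ‖z‖ = c ∧
      (‖z‖ < 1 ∧ z ^ n = -(‖z‖ : ℂ) ^ n ∨ 1 < ‖z‖ ∧ z ^ n = (‖z‖ : ℂ) ^ n) := by
  set ρ := ‖z‖
  have hρ : 0 < ρ := norm_pos_iff.2 hz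
  have hsplit : ρ ^ n = ρ ^ 2 * ρ ^ (n - 2) := by rw [← pow_add, Nat.add_sub_cancel' hn]
  have hmod : ∀ {t : ℝ}, radialProfile (n - 2) ρ = c → (ρ ^ 2 - 1) * t = ρ ^ n * |ρ ^ 2 - 1| →
      ((ρ : ℂ) ^ 2 - 1) * t = ρ ^ 2 * c := fun h ht => by
    rw [← h, radialProfile] at *
    exact_mod_cast ht.trans (by rw [hsplit]; ring)
  constructor
  · intro h
    have hc' : radialProfile (n - 2) ρ = c := by
      have h' : ((ρ ^ 2 - 1 : ℝ) : ℂ) * z ^ n = (ρ ^ 2 * c : ℝ) := by push_cast; exact h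
      have := congrArg norm h'
      rw [norm_mul, norm_pow, norm_real, norm_real, Real.norm_eq_abs, Real.norm_eq_abs,
        abs_of_pos (by positivity : 0 < ρ ^ 2 * c), hsplit] at this
      exact mul_left_cancel₀ (pow_ne_zero 2 hρ.ne') (by rw [radialProfile]; linarith)
    refine ⟨hc', ?_⟩
    have hρ₁ : ρ ≠ 1 := by rintro h1; simp [← hc', h1, radialProfile] at hc
    have hρ₁' : (ρ : ℂ) ^ 2 - 1 ≠ 0 := by
      exact_mod_cast sub_ne_zero.2 ((pow_eq_one_iff_of_nonneg hρ.le two_ne_zero).not.2 hρ₁)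
    rcases hρ₁.lt_or_gt with hlt | hgt
    · have ht := hmod hc' (t := -ρ ^ n) (by rw [abs_of_neg (by nlinarith)]; ring)
      push_cast at ht
      exact .inl ⟨hlt, mul_left_cancel₀ hρ₁' (h.trans ht.symm)⟩
    · have ht := hmod hc' (t := ρ ^ n) (by rw [abs_of_pos (by nlinarith)]; ring)
      push_cast at ht
      exact .inr ⟨hgt, mul_left_cancel₀ hρ₁' (h.trans ht.symm)⟩
  · rintro ⟨hc', ⟨hlt, h⟩ | ⟨hgt, h⟩⟩ <;> rw [h]
    · exact_mod_cast hmod hc' (t := -ρ ^ n) (by rw [abs_of_neg (by nlinarith)]; ring)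
    · exact_mod_cast hmod hc' (t := ρ ^ n) (by rw [abs_of_pos (by nlinarith)]; ring)

theorem setOf_div_eq_conj_eq (hn : 2 ≤ n) {c : ℝ} (hc : 0 < c) {r₁ r₂ r₃ : ℝ} (h₁ : 0 < r₁)
    (h₁₂ : r₁ < r₂) (h₂ : r₂ < 1) (h₃ : 1 < r₃)
    (hradii : ∀ ρ : ℝ, 0 ≤ ρ → (radialProfile (n - 2) ρ = c ↔ ρ = r₁ ∨ ρ = r₂ ∨ ρ = r₃)) :
    {z : ℂ | z ^ n ≠ c ∧ z ^ (n - 1) / (z ^ n - c) = conj z} =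
      {0} ∪ {z | z ^ n = -(r₁ : ℂ) ^ n} ∪ {z | z ^ n = -(r₂ : ℂ) ^ n} ∪
        {z | z ^ n = (r₃ : ℂ) ^ n} := by
  ext z
  simp only [Set.mem_union, Set.mem_singleton_iff, Set.mem_ofPred_eq]
  rcases eq_or_ne z 0 with rfl | hz
  · simp [zero_pow (show n ≠ 0 by omega), zero_pow (show n - 1 ≠ 0 by omega)]
    exact fun h => hc.ne' (ofReal_eq_zero.1 h.symm)
  have hnorm : ∀ {ρ : ℝ} {w : ℂ}, 0 < ρ → ‖w‖ = 1 → z ^ n = w * (ρ : ℂ) ^ n → ‖z‖ = ρ :=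
    fun hρ hw h => (pow_left_inj₀ (norm_nonneg z) hρ.le (show n ≠ 0 by omega)).1 <| by
      rw [← norm_pow, h, norm_mul, hw, norm_pow, norm_real, Real.norm_of_nonneg hρ.le, one_mul]
  rw [div_eq_conj_iff_of_ne_zero (by omega) (ofReal_ne_zero.2 hc.ne') hz,
    sq_norm_sub_one_mul_pow_eq_iff hn hc hz, hradii _ (norm_nonneg z)]
  constructor
  · rintro ⟨hρ | hρ | hρ, ⟨hρ₁, h⟩ | ⟨hρ₁, h⟩⟩ <;> rw [hρ] at hρ₁ h
    all_goals first | (exfalso; linarith) | simp [h]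
  · rintro (((h | h) | h) | h)
    · exact absurd h hz
    · have hρ := hnorm h₁ (by simp) (h.trans (neg_one_mul _).symm)
      exact ⟨.inl hρ, .inl ⟨hρ ▸ h₁₂.trans h₂, hρ ▸ h⟩⟩
    · have hρ := hnorm (h₁.trans h₁₂) (by simp) (h.trans (neg_one_mul _).symm)
      exact ⟨.inr (.inl hρ), .inl ⟨hρ ▸ h₂, hρ ▸ h⟩⟩
    · have hρ := hnorm (zero_lt_one.trans h₃) norm_one (h.trans (one_mul _).symm)
      exact ⟨.inr (.inr hρ), .inr ⟨hρ ▸ h₃, hρ ▸ h⟩⟩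

end Solutions

theorem rpow_sub_rpow_eq_radialProfile_sqrt {n : ℕ} (hn : 2 ≤ n) :
    (((n : ℝ) - 2) / n) ^ (((n : ℝ) - 2) / 2) - (((n : ℝ) - 2) / n) ^ ((n : ℝ) / 2) =
      radialProfile (n - 2) √(((n : ℝ) - 2) / n) := by
  have hn' : (2 : ℝ) ≤ n := by exact_mod_cast hn
  have ha₀ : 0 ≤ ((n : ℝ) - 2) / n := div_nonneg (by linarith) (Nat.cast_nonneg n)
  have ha₁ : ((n : ℝ) - 2) / n ≤ 1 := div_le_one_of_le₀ (by linarith) (Nat.cast_nonneg n)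
  set a := ((n : ℝ) - 2) / n
  have hcast : (n : ℝ) - 2 = (n - 2 : ℕ) := by rw [Nat.cast_sub hn, Nat.cast_two]
  rw [Real.rpow_div_two_eq_sqrt _ ha₀, Real.rpow_div_two_eq_sqrt _ ha₀, hcast, Real.rpow_natCast,
    Real.rpow_natCast, radialProfile_of_le_one (Real.sqrt_nonneg _) (Real.sqrt_le_one.2 ha₁),
    ← Nat.sub_add_cancel hn, pow_add, Nat.add_sub_cancel]
  ring

/-- For `n ≥ 3` and `0 < r < r_crit`, the equation `z^(n−1)/(z^n − r^n) = conj z`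
has exactly `3n+1` solutions: `z = 0` together with points on three circles. -/
theorem stmt_4 (n : ℕ) (hn : 3 ≤ n) (r : ℝ) (hr : 0 < r)
    (hrc : r < ((((n : ℝ) - 2) / n) ^ (((n : ℝ) - 2) / 2) -
          (((n : ℝ) - 2) / n) ^ ((n : ℝ) / 2)) ^ ((1 : ℝ) / n)) :
    {z : ℂ | z ^ n ≠ (r : ℂ) ^ n ∧
        z ^ (n - 1) / (z ^ n - (r : ℂ) ^ n) = (starRingEnd ℂ) z}.ncard = 3 * n + 1 ∧
    ∃ r₁ r₂ r₃ : ℝ, 0 < r₁ ∧ r₁ < r₂ ∧ r₂ < 1 ∧ 1 < r₃ ∧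
      {z : ℂ | z ^ n ≠ (r : ℂ) ^ n ∧
          z ^ (n - 1) / (z ^ n - (r : ℂ) ^ n) = (starRingEnd ℂ) z} =
        {0} ∪
        {z : ℂ | ∃ k < n, z = (r₁ : ℂ) *
          Complex.exp ((((2 * (k : ℝ) + 1) * Real.pi / n : ℝ) : ℂ) * Complex.I)} ∪
        {z : ℂ | ∃ k < n, z = (r₂ : ℂ) *
          Complex.exp ((((2 * (k : ℝ) + 1) * Real.pi / n : ℝ) : ℂ) * Complex.I)} ∪
        {z : ℂ | ∃ k < n, z = (r₃ : ℂ) *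
          Complex.exp (((2 * (k : ℝ) * Real.pi / n : ℝ) : ℂ) * Complex.I)} := by
  have hn₀ : n ≠ 0 := by omega
  set s := √(((n : ℝ) - 2) / n)
  have hs : (((n - 2 : ℕ) : ℝ) + 2) * s ^ 2 = (n - 2 : ℕ) := by
    have hn' : (3 : ℝ) ≤ n := by exact_mod_cast hn
    rw [Real.sq_sqrt (div_nonneg (by linarith) (by linarith)), Nat.cast_sub (by omega)]
    field_simp
    ring
  have hcs : r ^ n < radialProfile (n - 2) s := by
    have hB := radialProfile_nonneg (m := n - 2) (Real.sqrt_nonneg (((n : ℝ) - 2) / n))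
    rw [← rpow_sub_rpow_eq_radialProfile_sqrt (by omega)] at hB ⊢
    calc r ^ n < (_ ^ ((1 : ℝ) / n)) ^ n := pow_lt_pow_left₀ hrc hr.le hn₀
      _ = _ := by rw [one_div, Real.rpow_inv_natCast_pow hB hn₀]
  obtain ⟨r₁, r₂, r₃, h₁, h₁₂, h₂, h₃, hradii⟩ :=
    exists_radialProfile_eq_iff (by omega) (Real.sqrt_nonneg _) hs (pow_pos hr n) hcs
  have hsol := setOf_div_eq_conj_eq (by omega) (pow_pos hr n) h₁ h₁₂ h₂ h₃ hradii
  push_cast at hsol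
  simp_rw [hsol, setOf_exists_eq_mul_exp_odd_mul_pi hn₀, setOf_exists_eq_mul_exp_two_mul_pi hn₀]
  refine ⟨ncard_zero_union_setOf_pow_eq hn₀ ?_ ?_ ?_ ?_ ?_ ?_, r₁, r₂, r₃, h₁, h₁₂, h₂, h₃, rfl⟩
  all_goals
    norm_cast
    intro h
    linarith [pow_pos h₁ n, pow_lt_pow_left₀ h₁₂ h₁.le hn₀, pow_pos (zero_lt_one.trans h₃) n]
end

section
/- Let n ≥ 3, 0 < r < r_crit, and 0 < ε < 1. The polynomial f₊(ρ) = ρ^(n+2) − ρ^n − r^n ρ² + ε r^n has exactly two positive real roots r₁, r₅, and they satisfy 0 < r₁ < √ε and r₅ > 1. -/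
/-!
Write `f₊(ρ) = ρⁿ(ρ² - 1) - rⁿ(ρ² - ε)`. For `√ε ≤ ρ ≤ 1` the two terms have signs that force
`f₊(ρ) < 0`, while `f₊(0) > 0` and `f₊(ρ) > 0` for large `ρ`; the intermediate value theorem gives
a root in `(0, √ε)` and one in `(1, ∞)`. If `a < b` were two roots on the same side, cross-multiplying
`aⁿ(1 - a²) = rⁿ(ε - a²)` and `bⁿ(1 - b²) = rⁿ(ε - b²)` gives
`aⁿ(1 - a²)(ε - b²) = bⁿ(1 - b²)(ε - a²)`, whereas the right side is strictly larger because
`aⁿ < bⁿ` and `(1 - b²)(ε - a²) - (1 - a²)(ε - b²) = (b² - a²)(1 - ε) > 0`.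
-/

open Set

def fPlus (n : ℕ) (r ε ρ : ℝ) : ℝ :=
  ρ ^ (n + 2) - ρ ^ n - r ^ n * ρ ^ 2 + ε * r ^ n

section fPlus

variable {n : ℕ} {r ε ρ : ℝ}

theorem fPlus_eq (n : ℕ) (r ε ρ : ℝ) :
    fPlus n r ε ρ = ρ ^ n * (ρ ^ 2 - 1) - r ^ n * (ρ ^ 2 - ε) := by
  rw [fPlus, pow_add]
  ring

theorem continuous_fPlus (n : ℕ) (r ε : ℝ) : Continuous (fPlus n r ε) := by
  unfold fPlus
  fun_prop

theorem fPlus_zero_pos (hn : n ≠ 0) (hr : 0 < r) (hε0 : 0 < ε) : 0 < fPlus n r ε 0 := by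
  simpa [fPlus, zero_pow hn] using mul_pos hε0 (pow_pos hr n)

theorem fPlus_neg_of_mem_Icc (hr : 0 < r) (hε0 : 0 < ε) (hε1 : ε < 1)
    (hρ : ρ ∈ Icc (Real.sqrt ε) 1) : fPlus n r ε ρ < 0 := by
  obtain ⟨hlo, hhi⟩ := hρ
  have hρ0 : 0 < ρ := (Real.sqrt_pos.mpr hε0).trans_le hlo
  have hερ : ε ≤ ρ ^ 2 := (Real.sqrt_le_left hρ0.le).mp hlo
  have hρ1 : ρ ^ 2 ≤ 1 := pow_le_one₀ hρ0.le hhi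
  have hrn : 0 < r ^ n := pow_pos hr n
  rw [fPlus_eq]
  rcases hερ.eq_or_lt with h | h
  · rw [← h]
    nlinarith [mul_pos (pow_pos hρ0 n) (sub_pos.mpr hε1)]
  · nlinarith [mul_pos hrn (sub_pos.mpr h), mul_nonneg (pow_pos hρ0 n).le (sub_nonneg.mpr hρ1)]

theorem fPlus_pos_of_le (hn : n ≠ 0) (hr : 0 < r) (hε0 : 0 < ε) (h2 : 2 ≤ ρ) (h2r : 2 * r ≤ ρ) :
    0 < fPlus n r ε ρ := by
  have hrn : 0 < r ^ n := pow_pos hr n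
  have hρn : 2 * r ^ n ≤ ρ ^ n :=
    calc 2 * r ^ n ≤ 2 ^ n * r ^ n := by
          gcongr; exact le_self_pow₀ one_le_two hn
      _ = (2 * r) ^ n := (mul_pow 2 r n).symm
      _ ≤ ρ ^ n := by gcongr
  have hρ2 : 3 * ρ ^ 2 ≤ 4 * (ρ ^ 2 - 1) := by nlinarith
  rw [fPlus_eq]
  nlinarith [mul_le_mul hρn hρ2 (by positivity) (by positivity), mul_pos hrn hε0,
    mul_pos hrn (by positivity : (0 : ℝ) < ρ ^ 2)]

theorem fPlus_ne_zero_of_lt (hn : n ≠ 0) (hε1 : ε < 1) {a b : ℝ} (ha : 0 < a) (hab : a < b)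
    (hsign : 0 ≤ (1 - a ^ 2) * (ε - b ^ 2)) (hfa : fPlus n r ε a = 0) : fPlus n r ε b ≠ 0 := by
  intro hfb
  rw [fPlus_eq] at hfa hfb
  have hcross : a ^ n * ((1 - a ^ 2) * (ε - b ^ 2)) = b ^ n * ((1 - b ^ 2) * (ε - a ^ 2)) := by
    linear_combination (b ^ 2 - ε) * hfa - (a ^ 2 - ε) * hfb
  have hsq : a ^ 2 < b ^ 2 := pow_lt_pow_left₀ hab ha.le two_ne_zero
  have hfactor : (1 - a ^ 2) * (ε - b ^ 2) < (1 - b ^ 2) * (ε - a ^ 2) := by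
    nlinarith [mul_pos (sub_pos.mpr hsq) (sub_pos.mpr hε1)]
  have hlt : a ^ n * ((1 - a ^ 2) * (ε - b ^ 2)) < b ^ n * ((1 - b ^ 2) * (ε - a ^ 2)) :=
    mul_lt_mul'' (pow_lt_pow_left₀ hab ha.le hn) hfactor (pow_pos ha n).le hsign
  exact hlt.ne hcross

theorem subsingleton_fPlus_roots (hn : n ≠ 0) (hε1 : ε < 1) {s : Set ℝ} (hs : s ⊆ Ioi 0)
    (hsign : ∀ a ∈ s, ∀ b ∈ s, 0 ≤ (1 - a ^ 2) * (ε - b ^ 2)) :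
    {ρ | ρ ∈ s ∧ fPlus n r ε ρ = 0}.Subsingleton := by
  rintro a ⟨ha, hfa⟩ b ⟨hb, hfb⟩
  rcases lt_trichotomy a b with hab | rfl | hba
  · exact absurd hfb (fPlus_ne_zero_of_lt hn hε1 (hs ha) hab (hsign a ha b hb) hfa)
  · rfl
  · exact absurd hfa (fPlus_ne_zero_of_lt hn hε1 (hs hb) hba (hsign b hb a ha) hfb)

theorem subsingleton_fPlus_roots_Ioo (hn : n ≠ 0) (hε0 : 0 < ε) (hε1 : ε < 1) :
    {ρ | ρ ∈ Ioo 0 (Real.sqrt ε) ∧ fPlus n r ε ρ = 0}.Subsingleton := by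
  have hsq : ∀ ρ ∈ Ioo 0 (Real.sqrt ε), ρ ^ 2 < ε := fun ρ hρ =>
    (Real.lt_sqrt hρ.1.le).mp hρ.2
  refine subsingleton_fPlus_roots hn hε1 (fun ρ hρ => hρ.1) fun a ha b hb => ?_
  nlinarith [hsq a ha, hsq b hb]

theorem subsingleton_fPlus_roots_Ioi (hn : n ≠ 0) (hε1 : ε < 1) :
    {ρ | ρ ∈ Ioi 1 ∧ fPlus n r ε ρ = 0}.Subsingleton := by
  have hsq : ∀ ρ ∈ Ioi (1 : ℝ), 1 < ρ ^ 2 := fun ρ hρ => one_lt_pow₀ hρ two_ne_zero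
  refine subsingleton_fPlus_roots hn hε1 (fun ρ hρ => mem_Ioi.mpr (zero_lt_one.trans hρ)) fun a ha b hb => ?_
  nlinarith [hsq a ha, hsq b hb]

end fPlus

theorem stmt_7_general (n : ℕ) (hn : 3 ≤ n) (r ε : ℝ) (hr : 0 < r)
    (hε0 : 0 < ε) (hε1 : ε < 1) :
    ∃ r₁ r₅ : ℝ, 0 < r₁ ∧ r₁ < Real.sqrt ε ∧ 1 < r₅ ∧
      {ρ : ℝ | 0 < ρ ∧ ρ ^ (n + 2) - ρ ^ n - r ^ n * ρ ^ 2 + ε * r ^ n = 0} =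
        {r₁, r₅} := by
  have hn0 : n ≠ 0 := by omega
  have hsqrt : Real.sqrt ε ∈ Icc (Real.sqrt ε) 1 := ⟨le_rfl, Real.sqrt_le_one.mpr hε1.le⟩
  have hone : (1 : ℝ) ∈ Icc (Real.sqrt ε) 1 := ⟨hsqrt.2, le_rfl⟩
  obtain ⟨r₁, hr₁, hfr₁⟩ := intermediate_value_Ioo' (Real.sqrt_nonneg ε)
    (continuous_fPlus n r ε).continuousOn
    ⟨fPlus_neg_of_mem_Icc hr hε0 hε1 hsqrt, fPlus_zero_pos hn0 hr hε0⟩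
  obtain ⟨r₅, hr₅, hfr₅⟩ := intermediate_value_Ioo (one_le_two.trans (le_max_left 2 (2 * r)))
    (continuous_fPlus n r ε).continuousOn
    ⟨fPlus_neg_of_mem_Icc hr hε0 hε1 hone,
      fPlus_pos_of_le hn0 hr hε0 (le_max_left _ _) (le_max_right _ _)⟩
  refine ⟨r₁, r₅, hr₁.1, hr₁.2, hr₅.1, ?_⟩
  ext ρ
  change 0 < ρ ∧ fPlus n r ε ρ = 0 ↔ ρ = r₁ ∨ ρ = r₅
  constructor
  · rintro ⟨hρ, hfρ⟩
    rcases lt_or_ge ρ (Real.sqrt ε) with hlow | hge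
    · exact .inl (subsingleton_fPlus_roots_Ioo hn0 hε0 hε1 ⟨⟨hρ, hlow⟩, hfρ⟩ ⟨hr₁, hfr₁⟩)
    rcases le_or_gt ρ 1 with hle | hhigh
    · exact absurd hfρ (fPlus_neg_of_mem_Icc hr hε0 hε1 ⟨hge, hle⟩).ne
    · exact .inr (subsingleton_fPlus_roots_Ioi hn0 hε1 ⟨hhigh, hfρ⟩ ⟨hr₅.1, hfr₅⟩)
  · rintro (rfl | rfl)
    · exact ⟨hr₁.1, hfr₁⟩
    · exact ⟨zero_lt_one.trans hr₅.1, hfr₅⟩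

/-- For `n ≥ 3`, `0 < r < r_crit` and `0 < ε < 1`, the polynomial
`f₊(ρ) = ρ^(n+2) − ρ^n − r^n ρ² + ε r^n` has exactly two positive real roots
`r₁, r₅` with `0 < r₁ < √ε` and `r₅ > 1`. -/
theorem stmt_7 (n : ℕ) (hn : 3 ≤ n) (r ε : ℝ) (hr : 0 < r)
    (hrc : r < ((((n : ℝ) - 2) / n) ^ (((n : ℝ) - 2) / 2) -
          (((n : ℝ) - 2) / n) ^ ((n : ℝ) / 2)) ^ ((1 : ℝ) / n))
    (hε0 : 0 < ε) (hε1 : ε < 1) :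
    ∃ r₁ r₅ : ℝ, 0 < r₁ ∧ r₁ < Real.sqrt ε ∧ 1 < r₅ ∧
      {ρ : ℝ | 0 < ρ ∧ ρ ^ (n + 2) - ρ ^ n - r ^ n * ρ ^ 2 + ε * r ^ n = 0} =
        {r₁, r₅} :=
  stmt_7_general n hn r ε hr hε0 hε1
end

section
/- Let n ≥ 3 and 0 < r < r_crit. Then the polynomial g(ρ) = (n+2)ρ^n − n ρ^(n−2) + 2 r^n satisfies g(((n−2)/(n+2))^(1/2)) < 0, and g has exactly two positive real roots ξ₁ < ξ₂, with 0 < ξ₁ < ((n−2)/(n+2))^(1/2) < ξ₂ < 1. -/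
/-!
Write `s = √((n-2)/(n+2))`. Since `(n+2)s² = n-2`, `g(s) = 2(rⁿ - s^(n-2))`, and
`g'(ρ) = nρ^(n-3)((n+2)ρ² - (n-2))`, so `g` decreases on `[0, s]` and increases on `[s, ∞)`;
with `g(0), g(1) > 0` this gives exactly one root on each side of `s`. For `g(s) < 0` note
`r_critⁿ = b^((n-2)/2)·(2/n)` with `b = (n-2)/n`, while
`s^(n-2) = b^((n-2)/2)·(n/(n+2))^((n-2)/2)`; so it suffices that `(1 + 1/x)^(x-1) ≤ x` for
`x = n/2`, which is `log x ≥ 1 - 1/x` after taking logs.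
-/

open Real Set

lemma one_add_inv_rpow_sub_one_le {x : ℝ} (hx : 1 ≤ x) : (1 + x⁻¹) ^ (x - 1) ≤ x := by
  have hx0 : 0 < x := by linarith
  calc (1 + x⁻¹) ^ (x - 1) ≤ exp x⁻¹ ^ (x - 1) :=
        rpow_le_rpow (by positivity) (by linarith [add_one_le_exp x⁻¹]) (by linarith)
    _ = exp (1 - x⁻¹) := by rw [← exp_mul]; field_simp
    _ ≤ exp (log x) := exp_le_exp.2 (one_sub_inv_le_log_of_pos hx0)
    _ = x := exp_log hx0

lemma rpow_sub_rpow_eq_mul {t : ℝ} (ht : 2 < t) :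
    ((t - 2) / t) ^ ((t - 2) / 2) - ((t - 2) / t) ^ (t / 2) =
      ((t - 2) / t) ^ ((t - 2) / 2) * (2 / t) := by
  have hb : (t - 2) / t ≠ 0 := (div_pos (by linarith) (by linarith)).ne'
  rw [show t / 2 = (t - 2) / 2 + 1 by ring, rpow_add_one hb]
  field_simp
  ring

lemma rpow_mul_two_div_le {t : ℝ} (ht : 2 < t) :
    ((t - 2) / t) ^ ((t - 2) / 2) * (2 / t) ≤ ((t - 2) / (t + 2)) ^ ((t - 2) / 2) := by
  have ht0 : 0 < t := by linarith
  have hb : 0 ≤ (t - 2) / t := div_nonneg (by linarith) ht0.le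
  have hsplit : (t - 2) / (t + 2) = (t - 2) / t * (1 + (t / 2)⁻¹)⁻¹ := by
    field_simp
  have hx := one_add_inv_rpow_sub_one_le (x := t / 2) (by linarith)
  rw [hsplit, mul_rpow hb (by positivity), inv_rpow (by positivity)]
  gcongr
  rw [show (t - 2) / 2 = t / 2 - 1 by ring, show 2 / t = (t / 2)⁻¹ by field_simp]
  exact inv_anti₀ (by positivity) hx

lemma pow_lt_sqrt_pow_of_lt_rpow (n : ℕ) (hn : 3 ≤ n) {r : ℝ} (hr : 0 < r)
    (hrc : r < ((((n : ℝ) - 2) / n) ^ (((n : ℝ) - 2) / 2) -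
          (((n : ℝ) - 2) / n) ^ ((n : ℝ) / 2)) ^ ((1 : ℝ) / n)) :
    r ^ n < √(((n : ℝ) - 2) / ((n : ℝ) + 2)) ^ (n - 2) := by
  have ht : (2 : ℝ) < n := by exact_mod_cast hn
  have hcrit := rpow_sub_rpow_eq_mul ht
  have hcrit_nonneg : 0 ≤ (((n : ℝ) - 2) / n) ^ (((n : ℝ) - 2) / 2) -
      (((n : ℝ) - 2) / n) ^ ((n : ℝ) / 2) := by
    rw [hcrit]
    exact mul_nonneg (rpow_nonneg (div_nonneg (by linarith) (by linarith)) _) (by positivity)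
  rw [one_div, lt_rpow_inv_iff_of_pos hr.le hcrit_nonneg (by positivity), rpow_natCast] at hrc
  have hsqrt : √(((n : ℝ) - 2) / ((n : ℝ) + 2)) ^ (n - 2) =
      (((n : ℝ) - 2) / ((n : ℝ) + 2)) ^ (((n : ℝ) - 2) / 2) := by
    rw [sqrt_eq_rpow, ← rpow_natCast, ← rpow_mul (div_nonneg (by linarith) (by linarith)),
      Nat.cast_sub (by omega)]
    ring_nf
  calc r ^ n < _ := hrc
    _ = _ := hcrit
    _ ≤ _ := rpow_mul_two_div_le ht
    _ = _ := hsqrt.symm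

lemma exists_zeros_eq_pair_of_strictAntiOn_of_strictMonoOn {f : ℝ → ℝ} {a s b : ℝ}
    (hf : ContinuousOn f (Icc a b)) (has : a ≤ s) (hsb : s ≤ b)
    (hanti : StrictAntiOn f (Icc a s)) (hmono : StrictMonoOn f (Ici s))
    (ha : 0 < f a) (hs : f s < 0) (hb : 0 < f b) :
    ∃ ξ₁ ξ₂, a < ξ₁ ∧ ξ₁ < s ∧ s < ξ₂ ∧ ξ₂ < b ∧
      {x | a < x ∧ f x = 0} = {ξ₁, ξ₂} := by
  obtain ⟨ξ₁, ⟨haξ₁, hξ₁s⟩, hfξ₁⟩ :=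
    intermediate_value_Ioo' has (hf.mono (Icc_subset_Icc_right hsb)) ⟨hs, ha⟩
  obtain ⟨ξ₂, ⟨hsξ₂, hξ₂b⟩, hfξ₂⟩ :=
    intermediate_value_Ioo hsb (hf.mono (Icc_subset_Icc_left has)) ⟨hs, hb⟩
  refine ⟨ξ₁, ξ₂, haξ₁, hξ₁s, hsξ₂, hξ₂b, Set.ext fun x => ⟨?_, ?_⟩⟩
  · rintro ⟨hax, hfx⟩
    rcases le_or_gt x s with hxs | hsx
    · exact Or.inl <|
        hanti.injOn ⟨hax.le, hxs⟩ ⟨haξ₁.le, hξ₁s.le⟩ (hfx.trans hfξ₁.symm)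
    · exact Or.inr <| hmono.injOn hsx.le hsξ₂.le (hfx.trans hfξ₂.symm)
  · rintro (rfl | rfl)
    · exact ⟨haξ₁, hfξ₁⟩
    · exact ⟨has.trans_lt hsξ₂, hfξ₂⟩

def gPoly (n : ℕ) (r ρ : ℝ) : ℝ :=
  ((n : ℝ) + 2) * ρ ^ n - (n : ℝ) * ρ ^ (n - 2) + 2 * r ^ n

lemma hasDerivAt_gPoly {n : ℕ} (hn : 3 ≤ n) (r x : ℝ) :
    HasDerivAt (gPoly n r)
      ((n : ℝ) * x ^ (n - 3) * (((n : ℝ) + 2) * x ^ 2 - ((n : ℝ) - 2))) x := by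
  obtain ⟨k, rfl⟩ : ∃ k, n = k + 3 := ⟨n - 3, by omega⟩
  have hk : HasDerivAt (gPoly (k + 3) r)
      ((((k + 3 : ℕ) : ℝ) + 2) * ((k + 3 : ℕ) * x ^ (k + 2)) -
        ((k + 3 : ℕ) : ℝ) * ((k + 1 : ℕ) * x ^ k)) x :=
    (((hasDerivAt_pow (k + 3) x).const_mul _).sub
      ((hasDerivAt_pow (k + 1) x).const_mul _)).add_const _
  convert hk using 1
  push_cast
  ring

lemma add_two_mul_sqrt_sq {n : ℕ} (hn : 2 ≤ n) :
    ((n : ℝ) + 2) * √(((n : ℝ) - 2) / ((n : ℝ) + 2)) ^ 2 = (n : ℝ) - 2 := by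
  have h2 : (2 : ℝ) ≤ n := by exact_mod_cast hn
  rw [sq_sqrt (div_nonneg (by linarith) (by linarith))]
  field_simp

lemma gPoly_sqrt {n : ℕ} (hn : 2 ≤ n) (r : ℝ) :
    gPoly n r √(((n : ℝ) - 2) / ((n : ℝ) + 2)) =
      2 * r ^ n - 2 * √(((n : ℝ) - 2) / ((n : ℝ) + 2)) ^ (n - 2) := by
  set s := √(((n : ℝ) - 2) / ((n : ℝ) + 2))
  have hsn : s ^ n = s ^ (n - 2) * s ^ 2 := by rw [← pow_add, Nat.sub_add_cancel hn]
  rw [gPoly, hsn]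
  linear_combination s ^ (n - 2) * add_two_mul_sqrt_sq hn

lemma strictAntiOn_gPoly {n : ℕ} (hn : 3 ≤ n) (r : ℝ) :
    StrictAntiOn (gPoly n r) (Icc 0 √(((n : ℝ) - 2) / ((n : ℝ) + 2))) := by
  refine strictAntiOn_of_deriv_neg (convex_Icc _ _)
    (fun x _ => (hasDerivAt_gPoly hn r x).continuousAt.continuousWithinAt) fun x hx => ?_
  rw [interior_Icc] at hx
  rw [(hasDerivAt_gPoly hn r x).deriv]
  have hx2 : ((n : ℝ) + 2) * x ^ 2 < (n : ℝ) - 2 := by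
    rw [← add_two_mul_sqrt_sq (by omega)]
    gcongr
    exacts [hx.1.le, hx.2]
  have := pow_pos hx.1 (n - 3)
  exact mul_neg_of_pos_of_neg (by positivity) (by linarith)

lemma strictMonoOn_gPoly {n : ℕ} (hn : 3 ≤ n) (r : ℝ) :
    StrictMonoOn (gPoly n r) (Ici √(((n : ℝ) - 2) / ((n : ℝ) + 2))) := by
  refine strictMonoOn_of_deriv_pos (convex_Ici _)
    (fun x _ => (hasDerivAt_gPoly hn r x).continuousAt.continuousWithinAt) fun x hx => ?_
  rw [interior_Ici] at hx
  rw [(hasDerivAt_gPoly hn r x).deriv]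
  have hx0 : 0 < x := (sqrt_nonneg _).trans_lt hx
  have hx2 : (n : ℝ) - 2 < ((n : ℝ) + 2) * x ^ 2 := by
    rw [← add_two_mul_sqrt_sq (by omega)]
    gcongr
    exact hx
  have := pow_pos hx0 (n - 3)
  exact mul_pos (by positivity) (by linarith)

/-- For `n ≥ 3` and `0 < r < r_crit`, the polynomial
`g(ρ) = (n+2)ρ^n − nρ^(n−2) + 2r^n` is negative at `((n−2)/(n+2))^(1/2)` and has
exactly two positive real roots `ξ₁ < ((n−2)/(n+2))^(1/2) < ξ₂ < 1`. -/
theorem stmt_8 (n : ℕ) (hn : 3 ≤ n) (r : ℝ) (hr : 0 < r)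
    (hrc : r < ((((n : ℝ) - 2) / n) ^ (((n : ℝ) - 2) / 2) -
          (((n : ℝ) - 2) / n) ^ ((n : ℝ) / 2)) ^ ((1 : ℝ) / n)) :
    ((n : ℝ) + 2) * Real.sqrt (((n : ℝ) - 2) / ((n : ℝ) + 2)) ^ n -
      (n : ℝ) * Real.sqrt (((n : ℝ) - 2) / ((n : ℝ) + 2)) ^ (n - 2) + 2 * r ^ n < 0 ∧
    ∃ ξ₁ ξ₂ : ℝ, 0 < ξ₁ ∧ ξ₁ < Real.sqrt (((n : ℝ) - 2) / ((n : ℝ) + 2)) ∧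
      Real.sqrt (((n : ℝ) - 2) / ((n : ℝ) + 2)) < ξ₂ ∧ ξ₂ < 1 ∧
      {ρ : ℝ | 0 < ρ ∧ ((n : ℝ) + 2) * ρ ^ n - (n : ℝ) * ρ ^ (n - 2) + 2 * r ^ n = 0} =
        {ξ₁, ξ₂} := by
  have hg_sqrt : gPoly n r √(((n : ℝ) - 2) / ((n : ℝ) + 2)) < 0 := by
    rw [gPoly_sqrt (by omega)]
    linarith [pow_lt_sqrt_pow_of_lt_rpow n hn hr hrc]
  have hg_zero : 0 < gPoly n r 0 := by
    rw [gPoly, zero_pow (by omega), zero_pow (by omega)]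
    simp only [mul_zero, sub_zero, zero_add]
    positivity
  have hg_one : 0 < gPoly n r 1 := by
    rw [gPoly, one_pow, one_pow]
    linarith [pow_pos hr n]
  have hsqrt_lt_one : √(((n : ℝ) - 2) / ((n : ℝ) + 2)) < 1 := by
    rw [sqrt_lt' one_pos, one_pow, div_lt_one (by positivity)]
    linarith
  refine ⟨hg_sqrt, exists_zeros_eq_pair_of_strictAntiOn_of_strictMonoOn ?_ (sqrt_nonneg _)
    hsqrt_lt_one.le (strictAntiOn_gPoly hn r) (strictMonoOn_gPoly hn r) hg_zero hg_sqrt hg_one⟩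
  exact fun x _ => (hasDerivAt_gPoly hn r x).continuousAt.continuousWithinAt
end

section
/- Let n ≥ 3 and 0 < r < r_crit, and let ξ₁ be the smallest positive root of (n+2)ξ^n − nξ^(n−2) + 2r^n. Then ε* := (ξ₁^(n+2) − ξ₁^n + r^n ξ₁²)/r^n satisfies 0 < ε* < 1. -/
/-!
Write `g = rootPoly n r`. At `ρ₀ = √((n-2)/n)` one computes `g(ρ₀) = 2 (r^n - r_crit^n) < 0`,
while `g(0) = 2 r^n > 0`, so `g` has a root in `(0, ρ₀)` and the smallest positive root satisfies
`n ξ₁² < n - 2`. Eliminating `r^n` with `g(ξ₁) = 0` gives `2 r^n ε* = ξ₁^n (n - 2 - n ξ₁²)` and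
`2 r^n (1 - ε*) = n ξ₁^(n-2) (1 - ξ₁²)²`; both are positive.
-/

open Real Set

def rootPoly (n : ℕ) (r ρ : ℝ) : ℝ := (n + 2) * ρ ^ n - n * ρ ^ (n - 2) + 2 * r ^ n

noncomputable def epsStar (n : ℕ) (r ξ : ℝ) : ℝ := (ξ ^ (n + 2) - ξ ^ n + r ^ n * ξ ^ 2) / r ^ n

lemma pow_lt_of_lt_rpow_one_div {x y : ℝ} {n : ℕ} (hn : n ≠ 0) (hx : 0 ≤ x) (hy : 0 ≤ y)
    (h : x < y ^ ((1 : ℝ) / n)) : x ^ n < y := by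
  rwa [one_div, lt_rpow_inv_iff_of_pos hx hy (by positivity), rpow_natCast] at h

lemma rpow_sub_rpow_nonneg {a : ℝ} (ha0 : 0 < a) (ha1 : a ≤ 1) (p : ℝ) :
    0 ≤ a ^ ((p - 2) / 2) - a ^ (p / 2) :=
  sub_nonneg.2 (rpow_le_rpow_of_exponent_ge ha0 ha1 (by linarith))

lemma rootPoly_zero {n : ℕ} (hn : 3 ≤ n) (r : ℝ) : rootPoly n r 0 = 2 * r ^ n := by
  simp [rootPoly, zero_pow (by omega : n ≠ 0), zero_pow (by omega : n - 2 ≠ 0)]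

lemma exists_rootPoly_eq_zero_of_neg {n : ℕ} (hn : 3 ≤ n) {r s : ℝ} (hr : 0 < r) (hs : 0 ≤ s)
    (hneg : rootPoly n r s < 0) : ∃ x ∈ Ioo 0 s, rootPoly n r x = 0 :=
  intermediate_value_Ioo' hs
    (show Continuous (rootPoly n r) by unfold rootPoly; fun_prop).continuousOn
    ⟨hneg, by rw [rootPoly_zero hn]; positivity⟩

lemma rootPoly_sqrt {n : ℕ} (hn : 2 ≤ n) (r : ℝ) :
    rootPoly n r √(((n : ℝ) - 2) / n) =
      2 * (r ^ n - ((((n : ℝ) - 2) / n) ^ (((n : ℝ) - 2) / 2) -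
        (((n : ℝ) - 2) / n) ^ ((n : ℝ) / 2))) := by
  set a := ((n : ℝ) - 2) / n with ha
  have hn0 : (n : ℝ) ≠ 0 := by positivity
  have ha0 : 0 ≤ a := div_nonneg (by rw [sub_nonneg]; exact_mod_cast hn) (Nat.cast_nonneg n)
  obtain ⟨k, rfl⟩ := Nat.exists_eq_add_of_le' hn
  have hsq : √a ^ 2 = a := sq_sqrt ha0
  have hk2 : (k : ℝ) + 2 = ((k + 2 : ℕ) : ℝ) := by push_cast; rfl
  rw [rpow_div_two_eq_sqrt _ ha0, rpow_div_two_eq_sqrt _ ha0]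
  push_cast
  rw [add_sub_cancel_right, rpow_natCast, hk2, rpow_natCast]
  simp only [rootPoly, Nat.add_sub_cancel, pow_add, hsq]
  rw [ha]
  field_simp
  push_cast
  ring

section Root

variable {n : ℕ} {r ξ : ℝ}

lemma two_mul_epsStar_numerator_eq (hn : 2 ≤ n) (hξ : rootPoly n r ξ = 0) :
    2 * (ξ ^ (n + 2) - ξ ^ n + r ^ n * ξ ^ 2) = ξ ^ n * (n - 2 - n * ξ ^ 2) := by
  obtain ⟨k, rfl⟩ := Nat.exists_eq_add_of_le' hn
  simp only [rootPoly, Nat.add_sub_cancel] at hξ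
  linear_combination ξ ^ 2 * hξ

lemma two_mul_sub_epsStar_numerator_eq (hn : 2 ≤ n) (hξ : rootPoly n r ξ = 0) :
    2 * (r ^ n - (ξ ^ (n + 2) - ξ ^ n + r ^ n * ξ ^ 2)) =
      n * ξ ^ (n - 2) * (1 - ξ ^ 2) ^ 2 := by
  obtain ⟨k, rfl⟩ := Nat.exists_eq_add_of_le' hn
  simp only [rootPoly, Nat.add_sub_cancel] at hξ ⊢
  linear_combination (1 - ξ ^ 2) * hξ

lemma epsStar_pos (hn : 2 ≤ n) (hr : 0 < r) (hξ : rootPoly n r ξ = 0) (hξ0 : 0 < ξ)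
    (hξn : n * ξ ^ 2 < n - 2) : 0 < epsStar n r ξ := by
  have h := two_mul_epsStar_numerator_eq hn hξ
  have : 0 < ξ ^ n * (n - 2 - n * ξ ^ 2) := mul_pos (pow_pos hξ0 n) (by linarith)
  exact div_pos (by linarith) (pow_pos hr n)

lemma epsStar_lt_one (hn : 2 ≤ n) (hr : 0 < r) (hξ : rootPoly n r ξ = 0) (hξ0 : 0 < ξ)
    (hξ1 : ξ ^ 2 ≠ 1) : epsStar n r ξ < 1 := by
  have h := two_mul_sub_epsStar_numerator_eq hn hξ
  have : 1 - ξ ^ 2 ≠ 0 := sub_ne_zero.2 hξ1.symm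
  have : 0 < n * ξ ^ (n - 2) * (1 - ξ ^ 2) ^ 2 := by
    have : (0 : ℝ) < n := by exact_mod_cast (by omega : 0 < n)
    positivity
  exact (div_lt_one (pow_pos hr n)).2 (by linarith)

end Root

/-- For `n ≥ 3`, `0 < r < r_crit` and `ξ₁` the smallest positive root of
`(n+2)ξ^n − nξ^(n−2) + 2r^n`, the quantity
`ε* = (ξ₁^(n+2) − ξ₁^n + r^n ξ₁²)/r^n` satisfies `0 < ε* < 1`. -/
theorem stmt_9 (n : ℕ) (hn : 3 ≤ n) (r : ℝ) (hr : 0 < r)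
    (hrc : r < ((((n : ℝ) - 2) / n) ^ (((n : ℝ) - 2) / 2) -
          (((n : ℝ) - 2) / n) ^ ((n : ℝ) / 2)) ^ ((1 : ℝ) / n))
    (ξ₁ : ℝ) (hξ₁pos : 0 < ξ₁)
    (hξ₁root : ((n : ℝ) + 2) * ξ₁ ^ n - (n : ℝ) * ξ₁ ^ (n - 2) + 2 * r ^ n = 0)
    (hξ₁min : ∀ x : ℝ, 0 < x →
      ((n : ℝ) + 2) * x ^ n - (n : ℝ) * x ^ (n - 2) + 2 * r ^ n = 0 → ξ₁ ≤ x) :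
    0 < (ξ₁ ^ (n + 2) - ξ₁ ^ n + r ^ n * ξ₁ ^ 2) / r ^ n ∧
    (ξ₁ ^ (n + 2) - ξ₁ ^ n + r ^ n * ξ₁ ^ 2) / r ^ n < 1 := by
  have hn2 : 2 ≤ n := by omega
  have hn0 : (0 : ℝ) < n := by positivity
  set a := ((n : ℝ) - 2) / n with ha
  have ha0 : 0 < a := div_pos (by rw [sub_pos]; exact_mod_cast hn) hn0
  have ha1 : a < 1 := (div_lt_one hn0).2 (by linarith)
  have hrn := pow_lt_of_lt_rpow_one_div (by omega) hr.le (rpow_sub_rpow_nonneg ha0 ha1.le _) hrc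
  obtain ⟨x, hx, hgx⟩ := exists_rootPoly_eq_zero_of_neg hn hr (sqrt_nonneg a)
    (by rw [rootPoly_sqrt hn2]; linarith)
  have hξa : ξ₁ ^ 2 < a := (lt_sqrt hξ₁pos.le).1 ((hξ₁min x hx.1 hgx).trans_lt hx.2)
  have hξn : n * ξ₁ ^ 2 < n - 2 := by rw [ha, lt_div_iff₀ hn0] at hξa; linarith
  exact ⟨epsStar_pos hn2 hr hξ₁root hξ₁pos hξn,
    epsStar_lt_one hn2 hr hξ₁root hξ₁pos (hξa.trans ha1).ne⟩
end

section
/- Let n ≥ 3, 0 < r < r_crit, ξ₁ the smallest positive root of (n+2)ξ^n − nξ^(n−2) + 2r^n, and ε* = (ξ₁^(n+2) − ξ₁^n + r^n ξ₁²)/r^n. For 0 < ε < ε*, the polynomial f₋(ρ) = ρ^(n+2) − ρ^n + r^n ρ² − ε r^n has exactly three positive real roots r₂ < r₃ < r₄, and they satisfy √ε < r₂ < r₃ < r₄ < 1. -/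
/-!
Write `R = rⁿ`. Then `f₋'(ρ) = ρ g₋(ρ)` with `g₋(ρ) = (n+2)ρⁿ - nρⁿ⁻² + 2R`, and `g₋` decreases
on `[0, c]` and increases on `[c, ∞)`, where `c = √((n-2)/(n+2))`. Since `g₋(0) = 2R > 0`,
`g₋(1) > 0` and, because `r < r_crit`, `g₋(s) = 2(R - (sⁿ⁻² - sⁿ)) < 0` at `s = √((n-2)/n) > c`,
the positive roots of `g₋` are `ξ₁ < c` and some `ξ₂ ∈ (s, 1)`. Hence `f₋` increases on `[0, ξ₁]`,
decreases on `[ξ₁, ξ₂]` and increases on `[ξ₂, ∞)`. The signs `f₋(√ε) < 0`, `f₋(ξ₁) > 0` (which is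
`ε < ε*`), `f₋(ξ₂) < 0` and `f₋(1) > 0` then give exactly one root on each of these pieces.
-/

open Set

noncomputable def fMinus (n : ℕ) (R ε x : ℝ) : ℝ := x ^ (n + 2) - x ^ n + R * x ^ 2 - ε * R

noncomputable def gMinus (n : ℕ) (R x : ℝ) : ℝ := (n + 2) * x ^ n - n * x ^ (n - 2) + 2 * R

section SignChanges

variable {F G : ℝ → ℝ} {c ξ₁ ξ₂ : ℝ}

theorem lt_of_forall_pos_root_le (hG : ContinuousOn G (Icc 0 c)) (hc : 0 ≤ c)
    (hG0 : 0 < G 0) (hGc : G c < 0) (hmin : ∀ x, 0 < x → G x = 0 → ξ₁ ≤ x) : ξ₁ < c := by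
  obtain ⟨x, hx, hGx⟩ := intermediate_value_Ioo' hc hG (mem_Ioo.2 ⟨hGc, hG0⟩)
  exact (hmin x hx.1 hGx).trans_lt hx.2

theorem strictMonoOn_Icc_zero_of_hasDerivAt_mul (hF : ∀ x, HasDerivAt F (x * G x) x)
    (hanti : StrictAntiOn G (Icc 0 c)) (hξ₁c : ξ₁ ≤ c) (hGξ₁ : G ξ₁ = 0) :
    StrictMonoOn F (Icc 0 ξ₁) := by
  refine strictMonoOn_of_deriv_pos (convex_Icc _ _)
    (fun x _ ↦ (hF x).continuousAt.continuousWithinAt) fun x hx ↦ ?_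
  rw [interior_Icc] at hx
  have hGx : G ξ₁ < G x :=
    hanti ⟨hx.1.le, hx.2.le.trans hξ₁c⟩ ⟨(hx.1.trans hx.2).le, hξ₁c⟩ hx.2
  rw [(hF x).deriv]
  exact mul_pos hx.1 (hGξ₁ ▸ hGx)

theorem strictAntiOn_Icc_of_hasDerivAt_mul (hF : ∀ x, HasDerivAt F (x * G x) x)
    (hanti : StrictAntiOn G (Icc 0 c))
    (hmono : StrictMonoOn G (Ici c)) (hξ₁ : 0 ≤ ξ₁) (hξ₁c : ξ₁ ≤ c) (hξ₂c : c ≤ ξ₂)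
    (hGξ₁ : G ξ₁ = 0) (hGξ₂ : G ξ₂ = 0) : StrictAntiOn F (Icc ξ₁ ξ₂) := by
  refine strictAntiOn_of_deriv_neg (convex_Icc _ _)
    (fun x _ ↦ (hF x).continuousAt.continuousWithinAt) fun x hx ↦ ?_
  rw [interior_Icc] at hx
  have hGx : G x < 0 := by
    rcases le_or_gt x c with hxc | hxc
    · exact hGξ₁ ▸ hanti ⟨hξ₁, hξ₁c⟩ ⟨hξ₁.trans hx.1.le, hxc⟩ hx.1
    · exact hGξ₂ ▸ hmono hxc.le hξ₂c hx.2
  rw [(hF x).deriv]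
  exact mul_neg_of_pos_of_neg (hξ₁.trans_lt hx.1) hGx

theorem strictMonoOn_Ici_of_hasDerivAt_mul (hF : ∀ x, HasDerivAt F (x * G x) x)
    (hmono : StrictMonoOn G (Ici c)) (hc : 0 ≤ c)
    (hξ₂c : c ≤ ξ₂) (hGξ₂ : G ξ₂ = 0) : StrictMonoOn F (Ici ξ₂) := by
  refine strictMonoOn_of_deriv_pos (convex_Ici _)
    (fun x _ ↦ (hF x).continuousAt.continuousWithinAt) fun x hx ↦ ?_
  rw [interior_Ici] at hx
  rw [(hF x).deriv]
  exact mul_pos (hc.trans_lt (hξ₂c.trans_lt hx)) (hGξ₂ ▸ hmono hξ₂c (hξ₂c.trans hx.le) hx)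

end SignChanges

theorem exists_three_pos_roots_of_strictMonoOn_strictAntiOn {F : ℝ → ℝ} (hF : Continuous F)
    {a p q e : ℝ} (ha : 0 < a) (hap : a ≤ p) (hpq : p ≤ q) (hqe : q ≤ e)
    (h₁ : StrictMonoOn F (Icc 0 p)) (h₂ : StrictAntiOn F (Icc p q))
    (h₃ : StrictMonoOn F (Ici q))
    (hFa : F a < 0) (hFp : 0 < F p) (hFq : F q < 0) (hFe : 0 < F e) :
    ∃ r₂ r₃ r₄, a < r₂ ∧ r₂ < r₃ ∧ r₃ < r₄ ∧ r₄ < e ∧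
      {ρ | 0 < ρ ∧ F ρ = 0} = {r₂, r₃, r₄} := by
  obtain ⟨r₂, hr₂, hFr₂⟩ := intermediate_value_Ioo hap hF.continuousOn ⟨hFa, hFp⟩
  obtain ⟨r₃, hr₃, hFr₃⟩ := intermediate_value_Ioo' hpq hF.continuousOn ⟨hFq, hFp⟩
  obtain ⟨r₄, hr₄, hFr₄⟩ := intermediate_value_Ioo hqe hF.continuousOn ⟨hFq, hFe⟩
  have hr₂0 : 0 < r₂ := ha.trans hr₂.1
  have hr₃0 : 0 < r₃ := hr₂0.trans (hr₂.2.trans hr₃.1)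
  have hr₄0 : 0 < r₄ := hr₃0.trans (hr₃.2.trans hr₄.1)
  refine ⟨r₂, r₃, r₄, hr₂.1, hr₂.2.trans hr₃.1, hr₃.2.trans hr₄.1, hr₄.2, ?_⟩
  ext ρ
  simp only [mem_ofPred_eq, mem_insert_iff, mem_singleton_iff]
  constructor
  · rintro ⟨hρ, hFρ⟩
    rcases le_or_gt ρ p with hρp | hρp
    · exact .inl <| h₁.injOn ⟨hρ.le, hρp⟩ ⟨hr₂0.le, hr₂.2.le⟩ (hFρ.trans hFr₂.symm)
    rcases le_or_gt ρ q with hρq | hρq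
    · exact .inr <| .inl <| h₂.injOn ⟨hρp.le, hρq⟩ ⟨hr₃.1.le, hr₃.2.le⟩ (hFρ.trans hFr₃.symm)
    · exact .inr <| .inr <| h₃.injOn hρq.le hr₄.1.le (hFρ.trans hFr₄.symm)
  · rintro (rfl | rfl | rfl)
    exacts [⟨hr₂0, hFr₂⟩, ⟨hr₃0, hFr₃⟩, ⟨hr₄0, hFr₄⟩]

section Polynomials

variable {n : ℕ} {R ε : ℝ}

theorem continuous_fMinus : Continuous (fMinus n R ε) := by
  unfold fMinus; fun_prop

theorem continuous_gMinus : Continuous (gMinus n R) := by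
  unfold gMinus; fun_prop

theorem hasDerivAt_fMinus (hn : 2 ≤ n) (x : ℝ) :
    HasDerivAt (fMinus n R ε) (x * gMinus n R x) x := by
  obtain ⟨k, rfl⟩ : ∃ k, n = k + 2 := ⟨n - 2, by omega⟩
  refine ((((hasDerivAt_pow (k + 2 + 2) x).sub (hasDerivAt_pow (k + 2) x)).add
    ((hasDerivAt_pow 2 x).const_mul R)).sub_const (ε * R)).congr_deriv ?_
  simp only [gMinus, Nat.add_sub_cancel, Nat.add_succ_sub_one]
  push_cast
  ring

theorem hasDerivAt_gMinus (hn : 3 ≤ n) (x : ℝ) :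
    HasDerivAt (gMinus n R) (n * x ^ (n - 3) * ((n + 2) * x ^ 2 - (n - 2))) x := by
  obtain ⟨k, rfl⟩ : ∃ k, n = k + 3 := ⟨n - 3, by omega⟩
  refine ((((hasDerivAt_pow (k + 3) x).const_mul (((k + 3 : ℕ) : ℝ) + 2)).sub
    ((hasDerivAt_pow (k + 3 - 2) x).const_mul ((k + 3 : ℕ) : ℝ))).add_const
      (2 * R)).congr_deriv ?_
  simp only [Nat.add_sub_cancel, Nat.add_succ_sub_one, show k + 3 - 2 = k + 1 by omega]
  push_cast
  ring

theorem gMinus_zero (hn : 3 ≤ n) : gMinus n R 0 = 2 * R := by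
  simp [gMinus, zero_pow (by omega : n ≠ 0), zero_pow (by omega : n - 2 ≠ 0)]

theorem gMinus_one : gMinus n R 1 = 2 + 2 * R := by
  simp [gMinus]

theorem gMinus_sqrt (hn : 2 ≤ n) :
    gMinus n R √((n - 2) / n) =
      2 * (R - (√((n - 2) / n) ^ (n - 2) - √((n - 2) / n) ^ n)) := by
  have hn0 : (n : ℝ) ≠ 0 := by positivity
  have hsq : √((n - 2) / n) ^ 2 = (n - 2) / n :=
    Real.sq_sqrt (div_nonneg (by rw [sub_nonneg]; exact_mod_cast hn) (Nat.cast_nonneg n))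
  obtain ⟨k, rfl⟩ : ∃ k, n = k + 2 := ⟨n - 2, by omega⟩
  simp only [gMinus, Nat.add_sub_cancel, pow_add _ k 2, hsq]
  field_simp
  push_cast
  ring

theorem strictAntiOn_gMinus (hn : 3 ≤ n) :
    StrictAntiOn (gMinus n R) (Icc 0 √((n - 2) / (n + 2))) := by
  refine strictAntiOn_of_deriv_neg (convex_Icc _ _) continuous_gMinus.continuousOn
    fun x hx ↦ ?_
  rw [interior_Icc] at hx
  have hx2 : x ^ 2 < (n - 2) / (n + 2) := (Real.lt_sqrt hx.1.le).1 hx.2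
  rw [(hasDerivAt_gMinus hn x).deriv]
  refine mul_neg_of_pos_of_neg (by have := hx.1; positivity) ?_
  rw [lt_div_iff₀ (by positivity)] at hx2
  linarith

theorem strictMonoOn_gMinus (hn : 3 ≤ n) :
    StrictMonoOn (gMinus n R) (Ici √((n - 2) / (n + 2))) := by
  refine strictMonoOn_of_deriv_pos (convex_Ici _) continuous_gMinus.continuousOn
    fun x hx ↦ ?_
  rw [interior_Ici] at hx
  have hx0 : 0 < x := (Real.sqrt_nonneg _).trans_lt hx
  have hx2 : (n - 2) / (n + 2) < x ^ 2 := (Real.sqrt_lt' hx0).1 hx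
  rw [(hasDerivAt_gMinus hn x).deriv]
  refine mul_pos (by positivity) ?_
  rw [div_lt_iff₀ (by positivity)] at hx2
  linarith

theorem fMinus_sqrt_neg (hε0 : 0 < ε) (hε1 : ε < 1) : fMinus n R ε √ε < 0 := by
  have h : fMinus n R ε √ε = √ε ^ n * (ε - 1) := by
    rw [fMinus, pow_add, Real.sq_sqrt hε0.le]; ring
  rw [h]
  exact mul_neg_of_pos_of_neg (pow_pos (Real.sqrt_pos.2 hε0) n) (by linarith)

theorem fMinus_one_pos (hR : 0 < R) (hε1 : ε < 1) : 0 < fMinus n R ε 1 := by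
  have h : fMinus n R ε 1 = R * (1 - ε) := by simp [fMinus]; ring
  rw [h]
  exact mul_pos hR (by linarith)

theorem fMinus_pos_iff (hR : 0 < R) (x : ℝ) :
    0 < fMinus n R ε x ↔ ε < (x ^ (n + 2) - x ^ n + R * x ^ 2) / R := by
  rw [lt_div_iff₀ hR, fMinus, sub_pos]

theorem lt_sq_of_fMinus_pos (hR : 0 < R) {x : ℝ} (hx0 : 0 ≤ x) (hx1 : x ≤ 1)
    (h : 0 < fMinus n R ε x) : ε < x ^ 2 := by
  have hpow : x ^ (n + 2) ≤ x ^ n := pow_le_pow_of_le_one hx0 hx1 (by omega)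
  rw [fMinus] at h
  nlinarith

theorem fMinus_neg_of_gMinus_eq_zero (hn : 2 ≤ n) (hR : 0 < R) (hε : 0 < ε) {ξ : ℝ}
    (hξ : 0 < ξ) (hξs : √((n - 2) / n) < ξ) (hg : gMinus n R ξ = 0) :
    fMinus n R ε ξ < 0 := by
  have hn0 : (0 : ℝ) < n := by positivity
  have hξ2 : (n - 2) / n < ξ ^ 2 := (Real.sqrt_lt' hξ).1 hξs
  rw [div_lt_iff₀ hn0] at hξ2
  obtain ⟨k, rfl⟩ : ∃ k, n = k + 2 := ⟨n - 2, by omega⟩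
  have hkey : 2 * fMinus (k + 2) R ε ξ =
      ξ ^ (k + 2) * ((k + 2 - 2) - (k + 2) * ξ ^ 2) - 2 * ε * R := by
    simp only [gMinus, fMinus, Nat.add_sub_cancel] at hg ⊢
    push_cast at hg ⊢
    linear_combination ξ ^ 2 * hg
  push_cast at hξ2
  have hneg : ξ ^ (k + 2) * ((k + 2 - 2) - (k + 2) * ξ ^ 2) < 0 :=
    mul_neg_of_pos_of_neg (pow_pos hξ _) (by linarith)
  nlinarith [mul_pos hε hR]

end Polynomials

theorem pow_lt_of_lt_critRadius {n : ℕ} (hn : 3 ≤ n) {r : ℝ} (hr : 0 ≤ r)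
    (hrc : r < ((((n : ℝ) - 2) / n) ^ (((n : ℝ) - 2) / 2) -
      (((n : ℝ) - 2) / n) ^ ((n : ℝ) / 2)) ^ ((1 : ℝ) / n)) :
    r ^ n < √((n - 2) / n) ^ (n - 2) - √((n - 2) / n) ^ n := by
  have hn3 : (3 : ℝ) ≤ n := by exact_mod_cast hn
  have hb : 0 < ((n : ℝ) - 2) / n := div_pos (by linarith) (by positivity)
  have hs1 : √((n - 2) / n) < 1 := by
    rw [Real.sqrt_lt' one_pos, one_pow, div_lt_one (by positivity)]; linarith
  have hX : √((n - 2) / n) ^ n < √((n - 2) / n) ^ (n - 2) :=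
    pow_lt_pow_right_of_lt_one₀ (Real.sqrt_pos.2 hb) hs1 (by omega)
  have hpow : √((n - 2) / n) ^ ((n : ℝ) - 2) = √((n - 2) / n) ^ (n - 2) := by
    rw [← Real.rpow_natCast, Nat.cast_sub (by omega), Nat.cast_ofNat]
  rw [Real.rpow_div_two_eq_sqrt _ hb.le, Real.rpow_div_two_eq_sqrt _ hb.le, hpow,
    Real.rpow_natCast, one_div,
    Real.lt_rpow_inv_iff_of_pos hr (by linarith) (by positivity), Real.rpow_natCast] at hrc
  exact hrc

/-- For `n ≥ 3`, `0 < r < r_crit`, `ξ₁` the smallest positive root of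
`(n+2)ξ^n − nξ^(n−2) + 2r^n` and `0 < ε < ε*`, the polynomial
`f₋(ρ) = ρ^(n+2) − ρ^n + r^n ρ² − ε r^n` has exactly three positive roots
`√ε < r₂ < r₃ < r₄ < 1`. -/
theorem stmt_10 (n : ℕ) (hn : 3 ≤ n) (r ε : ℝ) (hr : 0 < r)
    (hrc : r < ((((n : ℝ) - 2) / n) ^ (((n : ℝ) - 2) / 2) -
          (((n : ℝ) - 2) / n) ^ ((n : ℝ) / 2)) ^ ((1 : ℝ) / n))
    (ξ₁ : ℝ) (hξ₁pos : 0 < ξ₁)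
    (hξ₁root : ((n : ℝ) + 2) * ξ₁ ^ n - (n : ℝ) * ξ₁ ^ (n - 2) + 2 * r ^ n = 0)
    (hξ₁min : ∀ x : ℝ, 0 < x →
      ((n : ℝ) + 2) * x ^ n - (n : ℝ) * x ^ (n - 2) + 2 * r ^ n = 0 → ξ₁ ≤ x)
    (hε0 : 0 < ε)
    (hεlt : ε < (ξ₁ ^ (n + 2) - ξ₁ ^ n + r ^ n * ξ₁ ^ 2) / r ^ n) :
    ∃ r₂ r₃ r₄ : ℝ, Real.sqrt ε < r₂ ∧ r₂ < r₃ ∧ r₃ < r₄ ∧ r₄ < 1 ∧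
      {ρ : ℝ | 0 < ρ ∧ ρ ^ (n + 2) - ρ ^ n + r ^ n * ρ ^ 2 - ε * r ^ n = 0} =
        {r₂, r₃, r₄} := by
  set R := r ^ n
  have hR : 0 < R := pow_pos hr n
  have hn3 : (3 : ℝ) ≤ n := by exact_mod_cast hn
  set c := √(((n : ℝ) - 2) / (n + 2))
  set s := √(((n : ℝ) - 2) / n)
  have hc : 0 ≤ c := Real.sqrt_nonneg _
  have hcs : c < s := Real.sqrt_lt_sqrt (div_nonneg (by linarith) (by positivity))
    (div_lt_div_of_pos_left (by linarith) (by positivity) (by linarith))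
  have hs1 : s < 1 := by
    rw [Real.sqrt_lt' one_pos, one_pow, div_lt_one (by positivity)]; linarith
  have hGs : gMinus n R s < 0 := by
    rw [gMinus_sqrt (by omega)]; linarith [pow_lt_of_lt_critRadius hn hr.le hrc]
  have hG0 : 0 < gMinus n R 0 := by rw [gMinus_zero hn]; positivity
  have hG1 : 0 < gMinus n R 1 := by rw [gMinus_one]; positivity
  have hξ₁c : ξ₁ < c := lt_of_forall_pos_root_le continuous_gMinus.continuousOn hc hG0
    ((strictMonoOn_gMinus hn (le_refl c) hcs.le hcs).trans hGs) hξ₁min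
  obtain ⟨ξ₂, ⟨hsξ₂, hξ₂1⟩, hGξ₂⟩ :=
    intermediate_value_Ioo hs1.le continuous_gMinus.continuousOn ⟨hGs, hG1⟩
  have hFξ₁ : 0 < fMinus n R ε ξ₁ := (fMinus_pos_iff hR ξ₁).2 hεlt
  have hεξ₁ : ε < ξ₁ ^ 2 := lt_sq_of_fMinus_pos hR hξ₁pos.le (by linarith) hFξ₁
  have hε1 : ε < 1 := hεξ₁.trans (pow_lt_one₀ hξ₁pos.le (by linarith) two_ne_zero)
  have hF := hasDerivAt_fMinus (R := R) (ε := ε) (by omega : 2 ≤ n)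
  exact exists_three_pos_roots_of_strictMonoOn_strictAntiOn continuous_fMinus
    (Real.sqrt_pos.2 hε0) ((Real.sqrt_lt' hξ₁pos).2 hεξ₁).le (by linarith) hξ₂1.le
    (strictMonoOn_Icc_zero_of_hasDerivAt_mul hF (strictAntiOn_gMinus hn) hξ₁c.le hξ₁root)
    (strictAntiOn_Icc_of_hasDerivAt_mul hF (strictAntiOn_gMinus hn) (strictMonoOn_gMinus hn)
      hξ₁pos.le hξ₁c.le (by linarith) hξ₁root hGξ₂)
    (strictMonoOn_Ici_of_hasDerivAt_mul hF (strictMonoOn_gMinus hn) hc (by linarith) hGξ₂)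
    (fMinus_sqrt_neg hε0 hε1) hFξ₁
    (fMinus_neg_of_gMinus_eq_zero (by omega) hR hε0 (by linarith) hsξ₂ hGξ₂)
    (fMinus_one_pos hR hε1)
end

section
/- Let n ≥ 3, 0 < r < r_crit, and let ε* be defined from the smallest positive root ξ₁ of (n+2)ξ^n − nξ^(n−2) + 2r^n via ε* = (ξ₁^(n+2) − ξ₁^n + r^n ξ₁²)/r^n. Then for every ε with 0 < ε < ε*, the equation (z^n − ε r^n)/(z(z^n − r^n)) = conj(z) has exactly 5n complex solutions. -/
/-!
Write `ρ = |z|`. Clearing denominators with `conj z * z = ρ²`, a solution satisfies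
`z ^ n * (1 - ρ²) = r ^ n * (ε - ρ²)`; since `ε ≠ 1` this forces `ρ ≠ 1`, so `z ^ n` is real and
hence equal to `ρ ^ n` or `-ρ ^ n`. Accordingly `ρ` is a positive root of
`p(x) = x^(n+2) - x^n - r^n x² + ε r^n` or of `q(x) = x^(n+2) - x^n + r^n x² - ε r^n`, and each
such root gives the `n` solutions of `z ^ n = ±ρ ^ n`.

Descartes' rule of signs allows `p` at most two and `q` at most three positive roots. Sign changes
of `p` at `0 < 1 < 1 + r^n` and of `q` at `0 < ξ₁ < ρ* < 1`, with `ρ* = √((n-2)/n)`, show that both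
bounds are attained. The hypothesis `r < r_crit` is exactly what makes `q(ρ*) < 0`; it also puts a
root of `(n+2)ξ^n - nξ^(n-2) + 2r^n` below `ρ*`, whence `ξ₁ < ρ*`.
-/

open Complex Polynomial Set

namespace Polynomial

def posRoots {R : Type*} [CommRing R] [LinearOrder R] (P : R[X]) : Set R :=
  {x | 0 < x ∧ P.IsRoot x}

@[simp]
theorem mem_posRoots {R : Type*} [CommRing R] [LinearOrder R] {P : R[X]} {x : R} :
    x ∈ P.posRoots ↔ 0 < x ∧ P.IsRoot x :=
  Iff.rfl

section Semiring
variable {R : Type*} [Semiring R]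

theorem leadingCoeff_C_mul_X_pow_add {a : R} (ha : a ≠ 0) {d : ℕ} {Q : R[X]}
    (hQ : Q.degree < d) :
    (C a * X ^ d + Q).leadingCoeff = a := by
  rw [leadingCoeff_add_of_degree_lt' (by rwa [degree_C_mul_X_pow d ha]), leadingCoeff_C_mul_X_pow]

theorem degree_C_mul_X_pow_add {a : R} (ha : a ≠ 0) {d : ℕ} {Q : R[X]}
    (hQ : Q.degree < d) :
    (C a * X ^ d + Q).degree = (d : WithBot ℕ) := by
  rw [degree_add_eq_left_of_degree_lt (by rwa [degree_C_mul_X_pow d ha]), degree_C_mul_X_pow d ha]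

variable [LinearOrder R]

theorem signVariations_C (c : R) : signVariations (C c) = 0 := by
  rw [← monomial_zero_left]; exact signVariations_monomial 0 c

theorem signVariations_C_mul_X_pow_add {a : R} (ha : a ≠ 0) {d : ℕ} {Q : R[X]}
    (hQ : Q.degree < d) :
    signVariations (C a * X ^ d + Q) = signVariations Q +
      if SignType.sign a = -SignType.sign Q.leadingCoeff then 1 else 0 := by
  have hlt : Q.degree < (C a * X ^ d).degree := by rwa [degree_C_mul_X_pow d ha]
  have hne : C a * X ^ d + Q ≠ 0 := fun h ↦ ha <| by
    rw [← leadingCoeff_C_mul_X_pow_add ha hQ, h, leadingCoeff_zero]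
  rw [signVariations_eq_eraseLead_add_ite hne, leadingCoeff_C_mul_X_pow_add ha hQ,
    eraseLead_add_of_degree_lt_left hlt, eraseLead_C_mul_X_pow, zero_add]

end Semiring

theorem ncard_posRoots_le_signVariations {R : Type*} [CommRing R] [LinearOrder R]
    [IsStrictOrderedRing R] (P : R[X]) :
    P.posRoots.ncard ≤ signVariations P := by
  classical
  rcases eq_or_ne P 0 with rfl | hP
  · simp only [posRoots, IsRoot.def, eval_zero, and_true]
    exact (Set.Ioi_infinite (0 : R)).ncard.trans_le (Nat.zero_le _)
  have hset : P.posRoots = ↑(P.roots.toFinset.filter (0 < ·)) := by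
    ext x; simp [mem_roots hP, and_comm]
  calc P.posRoots.ncard = (P.roots.filter (0 < ·)).toFinset.card := by
        rw [hset, ncard_coe_finset, Multiset.toFinset_filter]
    _ ≤ P.roots.countP (0 < ·) := by
        rw [Multiset.countP_eq_card_filter]; exact Multiset.toFinset_card_le _
    _ ≤ signVariations P := roots_countP_pos_le_signVariations P

end Polynomial

theorem exists_mem_Ioo_eq_zero_of_mul_neg {f : ℝ → ℝ} {a b : ℝ} (hab : a ≤ b)
    (hf : ContinuousOn f (Icc a b)) (h : f a * f b < 0) : ∃ x ∈ Ioo a b, f x = 0 := by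
  rcases mul_neg_iff.1 h with ⟨ha, hb⟩ | ⟨ha, hb⟩
  · exact intermediate_value_Ioo' hab hf ⟨hb, ha⟩
  · exact intermediate_value_Ioo hab hf ⟨ha, hb⟩

theorem Polynomial.le_ncard_posRoots_of_sign_changes {P : ℝ[X]} {k : ℕ} {t : Fin (k + 1) → ℝ}
    (ht : StrictMono t) (ht₀ : 0 ≤ t 0)
    (hsign : ∀ i : Fin k, P.eval (t i.castSucc) * P.eval (t i.succ) < 0) :
    k ≤ P.posRoots.ncard := by
  rcases k.eq_zero_or_pos with rfl | hk
  · exact Nat.zero_le _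
  have hP : P ≠ 0 := by
    rintro rfl; simpa using hsign ⟨0, hk⟩
  have hroot (i : Fin k) : ∃ x ∈ Ioo (t i.castSucc) (t i.succ), P.IsRoot x :=
    exists_mem_Ioo_eq_zero_of_mul_neg (ht Fin.castSucc_lt_succ).le
      P.continuous.continuousOn (hsign i)
  choose x hx hxroot using hroot
  have hxmono : StrictMono x := fun i j hij ↦
    calc x i < t i.succ := (hx i).2
      _ ≤ t j.castSucc := ht.monotone (Fin.succ_le_castSucc_iff.2 hij)
      _ < x j := (hx j).1
  have hxpos (i : Fin k) : 0 < x i :=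
    ht₀.trans_lt ((ht.monotone (Fin.zero_le _)).trans_lt (hx i).1)
  calc k = (range x).ncard := by
        rw [ncard_range_of_injective hxmono.injective, Nat.card_fin]
    _ ≤ P.posRoots.ncard :=
        ncard_le_ncard (range_subset_iff.2 fun i ↦ mem_posRoots.2 ⟨hxpos i, hxroot i⟩)
          ((P.finite_setOfPred_isRoot hP).subset fun _ hy ↦ hy.2)

theorem Complex.card_nthRootsFinset_s11 {n : ℕ} (hn : n ≠ 0) {c : ℂ} (hc : c ≠ 0) :
    (nthRootsFinset n c).card = n := by
  classical
  have hζ := Complex.isPrimitiveRoot_exp n hn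
  rw [nthRootsFinset_def, Multiset.toFinset_card_of_nodup (hζ.nthRoots_nodup hc),
    hζ.card_nthRoots, if_pos (IsAlgClosed.exists_pow_nat_eq c (Nat.pos_of_ne_zero hn))]

theorem Complex.ncard_setOf_pow_mem {n : ℕ} (hn : n ≠ 0) {C : Set ℂ} (hC : C.Finite)
    (h₀ : 0 ∉ C) : {z : ℂ | z ^ n ∈ C}.ncard = n * C.ncard := by
  classical
  lift C to Finset ℂ using hC
  have hset : {z : ℂ | z ^ n ∈ (C : Set ℂ)} = ↑(C.biUnion fun c ↦ nthRootsFinset n c) := by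
    ext z; simp [mem_nthRootsFinset (Nat.pos_of_ne_zero hn)]
  have hdisj : (C : Set ℂ).PairwiseDisjoint (fun c ↦ nthRootsFinset n c) := fun a _ b _ hab ↦
    Finset.disjoint_left.2 fun z ha hb ↦ hab <| by
      rw [← (mem_nthRootsFinset (Nat.pos_of_ne_zero hn) a).1 ha,
        (mem_nthRootsFinset (Nat.pos_of_ne_zero hn) b).1 hb]
  rw [hset, ncard_coe_finset, Finset.card_biUnion hdisj, ncard_coe_finset,
    Finset.sum_congr rfl fun c hc ↦ card_nthRootsFinset_s11 hn (ne_of_mem_of_not_mem hc h₀),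
    Finset.sum_const, smul_eq_mul, mul_comm]

namespace LensEquation

noncomputable def radiusPolyPos (n : ℕ) (R ε : ℝ) : ℝ[X] :=
  X ^ (n + 2) - X ^ n - C R * X ^ 2 + C (ε * R)

noncomputable def radiusPolyNeg (n : ℕ) (R ε : ℝ) : ℝ[X] :=
  X ^ (n + 2) - X ^ n + C R * X ^ 2 - C (ε * R)

variable {n : ℕ} {R ε : ℝ}

theorem signVariations_radiusPolyPos (hn : 2 < n) (hR : 0 < R) (hε : 0 < ε) :
    signVariations (radiusPolyPos n R ε) = 2 := by
  set Q₀ : ℝ[X] := C (ε * R)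
  set Q₂ := C (-R) * X ^ 2 + Q₀
  set Qₙ := C (-1) * X ^ n + Q₂
  have hR' : -R ≠ 0 := neg_ne_zero.2 hR.ne'
  have h₀ : Q₀.degree < (2 : ℕ) := degree_C_le.trans_lt (by decide)
  have h₂ : Q₂.degree < n := by
    rw [degree_C_mul_X_pow_add hR' h₀]; exact_mod_cast hn
  have hₙ : Qₙ.degree < (n + 2 : ℕ) := by
    rw [degree_C_mul_X_pow_add (by norm_num) h₂]; exact_mod_cast (by omega : n < n + 2)
  have : radiusPolyPos n R ε = C 1 * X ^ (n + 2) + Qₙ := by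
    simp only [Qₙ, Q₂, Q₀, radiusPolyPos, map_neg, map_one]; ring
  rw [this, signVariations_C_mul_X_pow_add one_ne_zero hₙ,
    signVariations_C_mul_X_pow_add (by norm_num) h₂, signVariations_C_mul_X_pow_add hR' h₀,
    signVariations_C, leadingCoeff_C_mul_X_pow_add (by norm_num) h₂,
    leadingCoeff_C_mul_X_pow_add hR' h₀, leadingCoeff_C]
  simp [Left.sign_neg, sign_pos hR, sign_pos (mul_pos hε hR)]

theorem signVariations_radiusPolyNeg (hn : 2 < n) (hR : 0 < R) (hε : 0 < ε) :
    signVariations (radiusPolyNeg n R ε) = 3 := by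
  set Q₀ : ℝ[X] := C (-(ε * R))
  set Q₂ := C R * X ^ 2 + Q₀
  set Qₙ := C (-1) * X ^ n + Q₂
  have h₀ : Q₀.degree < (2 : ℕ) := degree_C_le.trans_lt (by decide)
  have h₂ : Q₂.degree < n := by
    rw [degree_C_mul_X_pow_add hR.ne' h₀]; exact_mod_cast hn
  have hₙ : Qₙ.degree < (n + 2 : ℕ) := by
    rw [degree_C_mul_X_pow_add (by norm_num) h₂]; exact_mod_cast (by omega : n < n + 2)
  have : radiusPolyNeg n R ε = C 1 * X ^ (n + 2) + Qₙ := by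
    simp only [Qₙ, Q₂, Q₀, radiusPolyNeg, map_neg, map_one]; ring
  rw [this, signVariations_C_mul_X_pow_add one_ne_zero hₙ,
    signVariations_C_mul_X_pow_add (by norm_num) h₂, signVariations_C_mul_X_pow_add hR.ne' h₀,
    signVariations_C, leadingCoeff_C_mul_X_pow_add (by norm_num) h₂,
    leadingCoeff_C_mul_X_pow_add hR.ne' h₀, leadingCoeff_C]
  simp [Left.sign_neg, sign_pos hR, sign_pos (mul_pos hε hR)]

@[simp]
theorem eval_radiusPolyPos (x : ℝ) :
    (radiusPolyPos n R ε).eval x = x ^ (n + 2) - x ^ n - R * x ^ 2 + ε * R := by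
  simp [radiusPolyPos]

@[simp]
theorem eval_radiusPolyNeg (x : ℝ) :
    (radiusPolyNeg n R ε).eval x = x ^ (n + 2) - x ^ n + R * x ^ 2 - ε * R := by
  simp [radiusPolyNeg]

theorem ncard_posRoots_radiusPolyPos (hn : 2 < n) (hR : 0 < R) (hε₀ : 0 < ε)
    (hε₁ : ε < 1) : (radiusPolyPos n R ε).posRoots.ncard = 2 := by
  refine le_antisymm ((ncard_posRoots_le_signVariations _).trans
    (signVariations_radiusPolyPos hn hR hε₀).le) ?_
  set M := 1 + R
  have hM : 0 < M ^ (n + 2) - M ^ n - R * M ^ 2 + ε * R := by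
    have hMn : M ^ 2 ≤ M ^ n := pow_le_pow_right₀ (by linarith) (by omega)
    calc 0 < M ^ 2 * (R * M) + ε * R := by positivity
      _ = M ^ 2 * (M ^ 2 - 1) - R * M ^ 2 + ε * R := by ring
      _ ≤ M ^ n * (M ^ 2 - 1) - R * M ^ 2 + ε * R := by
        nlinarith [mul_le_mul_of_nonneg_right hMn (by nlinarith : (0:ℝ) ≤ M ^ 2 - 1)]
      _ = _ := by ring
  refine le_ncard_posRoots_of_sign_changes (t := ![0, 1, M]) ?_ le_rfl ?_
  · refine Fin.strictMono_iff_lt_succ.2 fun i ↦ ?_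
    fin_cases i <;> simp [M, hR]
  · intro i
    have h₁ : ε * R - R < 0 := by nlinarith
    fin_cases i <;> simp [zero_pow (by omega : n ≠ 0)]
    · nlinarith [mul_pos hε₀ hR]
    · nlinarith

theorem ncard_posRoots_radiusPolyNeg (hn : 2 < n) (hR : 0 < R) (hε₀ : 0 < ε)
    (hε₁ : ε < 1) {ξ ρ : ℝ} (hξ : 0 < ξ) (hξρ : ξ < ρ) (hρ : ρ < 1)
    (hRρ : R < ρ ^ (n - 2) - ρ ^ n) (hεξ : ε * R < ξ ^ (n + 2) - ξ ^ n + R * ξ ^ 2) :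
    (radiusPolyNeg n R ε).posRoots.ncard = 3 := by
  refine le_antisymm ((ncard_posRoots_le_signVariations _).trans
    (signVariations_radiusPolyNeg hn hR hε₀).le) ?_
  have hρ' : ρ ^ (n + 2) - ρ ^ n + R * ρ ^ 2 - ε * R < 0 := by
    have h := mul_lt_mul_of_pos_right hRρ (pow_pos (hξ.trans hξρ) 2)
    rw [sub_mul, pow_sub_mul_pow ρ (by omega), ← pow_add] at h
    nlinarith [mul_pos hε₀ hR]
  refine le_ncard_posRoots_of_sign_changes (t := ![0, ξ, ρ, 1]) ?_ le_rfl ?_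
  · refine Fin.strictMono_iff_lt_succ.2 fun i ↦ ?_
    fin_cases i <;> simp [hξ, hξρ, hρ]
  · intro i
    have h₁ : 0 < R - ε * R := by nlinarith
    fin_cases i <;> simp [zero_pow (by omega : n ≠ 0)]
    · nlinarith [mul_pos hε₀ hR]
    · nlinarith
    · nlinarith

def lensSolutions (n : ℕ) (r ε : ℝ) : Set ℂ :=
  {z | z ≠ 0 ∧ z ^ n ≠ (r : ℂ) ^ n ∧
    (z ^ n - (ε : ℂ) * (r : ℂ) ^ n) / (z * (z ^ n - (r : ℂ) ^ n)) = (starRingEnd ℂ) z}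

variable {r : ℝ} {z : ℂ}

theorem mem_lensSolutions_iff_radial (hr : r ≠ 0) (hε : ε ≠ 1) :
    z ∈ lensSolutions n r ε ↔
      z ≠ 0 ∧ z ^ n * (1 - (‖z‖ : ℂ) ^ 2) = (r : ℂ) ^ n * (ε - (‖z‖ : ℂ) ^ 2) := by
  have hconj := conj_mul' z
  constructor
  · rintro ⟨hz, hzr, heq⟩
    rw [div_eq_iff (mul_ne_zero hz (sub_ne_zero.2 hzr))] at heq
    exact ⟨hz, by linear_combination heq + (z ^ n - (r : ℂ) ^ n) * hconj⟩
  · rintro ⟨hz, hrad⟩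
    have hzr : z ^ n ≠ (r : ℂ) ^ n := by
      intro h
      rw [h] at hrad
      have h' : ((r ^ n * (1 - ε) : ℝ) : ℂ) = 0 := by push_cast; linear_combination hrad
      rw [ofReal_eq_zero, mul_eq_zero, sub_eq_zero] at h'
      exact h'.elim (pow_ne_zero n hr) (Ne.symm hε)
    refine ⟨hz, hzr, ?_⟩
    rw [div_eq_iff (mul_ne_zero hz (sub_ne_zero.2 hzr))]
    linear_combination hrad - (z ^ n - (r : ℂ) ^ n) * hconj

theorem exists_pow_eq_ofReal_of_radial (hr : r ≠ 0) (hε : ε ≠ 1)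
    (hrad : z ^ n * (1 - (‖z‖ : ℂ) ^ 2) = (r : ℂ) ^ n * (ε - (‖z‖ : ℂ) ^ 2)) :
    ∃ w : ℝ, z ^ n = w := by
  have hz₁ : (1 : ℂ) - (‖z‖ : ℂ) ^ 2 ≠ 0 := by
    intro h
    have h' : ((r ^ n * (ε - 1) : ℝ) : ℂ) = 0 := by
      push_cast; linear_combination -hrad + (z ^ n - (r : ℂ) ^ n) * h
    rw [ofReal_eq_zero, mul_eq_zero, sub_eq_zero] at h'
    exact h'.elim (pow_ne_zero n hr) hε
  exact ⟨r ^ n * (ε - ‖z‖ ^ 2) / (1 - ‖z‖ ^ 2), by push_cast; rw [eq_div_iff hz₁, hrad]⟩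

theorem lensSolutions_eq (hn : n ≠ 0) (hr : r ≠ 0) (hε : ε ≠ 1) :
    lensSolutions n r ε = {z | z ^ n ∈
      (fun x : ℝ ↦ (x : ℂ) ^ n) '' (radiusPolyPos n (r ^ n) ε).posRoots ∪
      (fun x : ℝ ↦ -(x : ℂ) ^ n) '' (radiusPolyNeg n (r ^ n) ε).posRoots} := by
  ext z
  simp only [mem_lensSolutions_iff_radial hr hε, mem_ofPred_eq, mem_union, mem_image,
    mem_posRoots, IsRoot.def, eval_radiusPolyPos, eval_radiusPolyNeg]
  constructor
  · rintro ⟨hz, hrad⟩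
    obtain ⟨w, hw⟩ := exists_pow_eq_ofReal_of_radial hr hε hrad
    set ρ := ‖z‖
    have hρ : 0 < ρ := norm_pos_iff.2 hz
    have habs : |w| = ρ ^ n := by
      rw [← Real.norm_eq_abs, ← norm_real, ← hw, norm_pow]
    rw [hw] at hrad
    rcases (abs_eq (by positivity)).1 habs with rfl | rfl
    · refine Or.inl ⟨ρ, ⟨hρ, ?_⟩, by rw [hw]; push_cast; rfl⟩
      have : ρ ^ n * (1 - ρ ^ 2) = r ^ n * (ε - ρ ^ 2) := by exact_mod_cast hrad
      linear_combination -this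
    · refine Or.inr ⟨ρ, ⟨hρ, ?_⟩, by rw [hw]; push_cast; rfl⟩
      have : -ρ ^ n * (1 - ρ ^ 2) = r ^ n * (ε - ρ ^ 2) := by exact_mod_cast hrad
      linear_combination this
  · have hnorm {x : ℝ} (hx : 0 < x) {c : ℂ} (hc : ‖c‖ = x ^ n) (hzc : z ^ n = c) :
        ‖z‖ = x := by
      rwa [← hzc, norm_pow, pow_left_inj₀ (norm_nonneg z) hx.le hn] at hc
    rintro (⟨x, ⟨hx, hroot⟩, hzx⟩ | ⟨x, ⟨hx, hroot⟩, hzx⟩)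
    · have hzn := hnorm hx (by simp [abs_of_pos hx]) hzx.symm
      refine ⟨norm_pos_iff.1 (hzn ▸ hx), ?_⟩
      rw [hzn, ← hzx]
      exact_mod_cast (by linear_combination -hroot :
        x ^ n * (1 - x ^ 2) = r ^ n * (ε - x ^ 2))
    · have hzn := hnorm hx (by simp [abs_of_pos hx]) hzx.symm
      refine ⟨norm_pos_iff.1 (hzn ▸ hx), ?_⟩
      rw [hzn, ← hzx]
      exact_mod_cast (by linear_combination hroot :
        -x ^ n * (1 - x ^ 2) = r ^ n * (ε - x ^ 2))

theorem ncard_lensSolutions (hn : n ≠ 0) (hr : r ≠ 0) (hε : ε ≠ 1)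
    (hP : (radiusPolyPos n (r ^ n) ε).posRoots.Finite)
    (hQ : (radiusPolyNeg n (r ^ n) ε).posRoots.Finite) :
    (lensSolutions n r ε).ncard = n * ((radiusPolyPos n (r ^ n) ε).posRoots.ncard +
      (radiusPolyNeg n (r ^ n) ε).posRoots.ncard) := by
  have hpow {x : ℝ} (hx : 0 < x) : (x : ℂ) ^ n ≠ 0 := pow_ne_zero n (ofReal_ne_zero.2 hx.ne')
  have hinj {x y : ℝ} (hx : 0 < x) (hy : 0 < y) (h : (x : ℂ) ^ n = (y : ℂ) ^ n) : x = y :=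
    (pow_left_inj₀ hx.le hy.le hn).1 (by exact_mod_cast h)
  rw [lensSolutions_eq hn hr hε,
    Complex.ncard_setOf_pow_mem hn ((hP.image _).union (hQ.image _)),
    ncard_union_eq _ (hP.image _) (hQ.image _),
    InjOn.ncard_image fun x hx y hy h ↦ hinj hx.1 hy.1 h,
    InjOn.ncard_image fun x hx y hy h ↦ hinj hx.1 hy.1 (neg_inj.1 h)]
  · rw [disjoint_left]
    rintro _ ⟨x, hx, rfl⟩ ⟨y, hy, h⟩
    beta_reduce at h
    have : -y ^ n = x ^ n := by exact_mod_cast h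
    nlinarith [pow_pos hx.1 n, pow_pos hy.1 n]
  · rintro (⟨x, hx, h⟩ | ⟨x, hx, h⟩)
    · exact hpow hx.1 h
    · exact hpow hx.1 (neg_eq_zero.1 h)

-- `critRadius n ^ n` is the maximum of `x ^ (n - 2) - x ^ n` over `x > 0`, attained at
-- `critPoint n`.
noncomputable def critRadius (n : ℕ) : ℝ :=
  ((((n : ℝ) - 2) / n) ^ (((n : ℝ) - 2) / 2) - (((n : ℝ) - 2) / n) ^ ((n : ℝ) / 2)) ^ ((1 : ℝ) / n)

noncomputable def critPoint (n : ℕ) : ℝ := √(((n : ℝ) - 2) / n)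

theorem critPoint_pos (hn : 2 < n) : 0 < critPoint n := by
  have : (2 : ℝ) < n := by exact_mod_cast hn
  exact Real.sqrt_pos.2 (div_pos (by linarith) (by linarith))

theorem critPoint_lt_one (hn : 2 < n) : critPoint n < 1 := by
  have : (2 : ℝ) < n := by exact_mod_cast hn
  rw [critPoint, Real.sqrt_lt' one_pos, one_pow, div_lt_one (by linarith)]
  linarith

theorem natCast_mul_critPoint_sq (hn : 2 < n) : n * critPoint n ^ 2 = n - 2 := by
  have : (2 : ℝ) < n := by exact_mod_cast hn
  rw [critPoint, Real.sq_sqrt (div_nonneg (by linarith) (by linarith))]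
  field_simp

theorem critRadius_pow (hn : 2 < n) :
    critRadius n ^ n = critPoint n ^ (n - 2) - critPoint n ^ n := by
  have : (2 : ℝ) < n := by exact_mod_cast hn
  have hc : 0 ≤ ((n : ℝ) - 2) / n := div_nonneg (by linarith) (by linarith)
  have hB : 0 ≤ critPoint n ^ (n - 2) - critPoint n ^ n :=
    sub_nonneg.2 <| pow_le_pow_of_le_one (critPoint_pos hn).le (critPoint_lt_one hn).le
      (Nat.sub_le n 2)
  have hsub : critPoint n ^ ((n : ℝ) - 2) = critPoint n ^ (n - 2) := by
    rw [← Real.rpow_natCast, Nat.cast_sub hn.le, Nat.cast_ofNat]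
  rw [critRadius, Real.rpow_div_two_eq_sqrt _ hc, Real.rpow_div_two_eq_sqrt _ hc]
  change ((critPoint n ^ ((n : ℝ) - 2) - critPoint n ^ (n : ℝ)) ^ ((1 : ℝ) / n)) ^ n = _
  rw [hsub, Real.rpow_natCast, one_div]
  exact Real.rpow_inv_natCast_pow hB (by omega)

theorem lt_critPoint_of_forall_le (hn : 2 < n) (hR : 0 < R)
    (hRc : R < critPoint n ^ (n - 2) - critPoint n ^ n) {ξ : ℝ}
    (hξ : ∀ x : ℝ, 0 < x → ((n : ℝ) + 2) * x ^ n - (n : ℝ) * x ^ (n - 2) + 2 * R = 0 → ξ ≤ x) :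
    ξ < critPoint n := by
  set ρ := critPoint n
  set f : ℝ → ℝ := fun x ↦ ((n : ℝ) + 2) * x ^ n - (n : ℝ) * x ^ (n - 2) + 2 * R
  have hn₀ : (0 : ℝ) < n := by positivity
  have hρn : ρ ^ n = ρ ^ (n - 2) * ρ ^ 2 := (pow_sub_mul_pow ρ (by omega)).symm
  have hsq : n * ρ ^ 2 = n - 2 := natCast_mul_critPoint_sq hn
  have hf₀ : f 0 = 2 * R := by
    simp [f, zero_pow (by omega : n ≠ 0), zero_pow (by omega : n - 2 ≠ 0)]
  have hfρ : f ρ < 0 := by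
    have hnf : n * f ρ = 2 * (n * R - 2 * ρ ^ (n - 2)) := by
      simp only [f]; rw [hρn]; linear_combination ((n : ℝ) + 2) * ρ ^ (n - 2) * hsq
    have hnR : n * R < 2 * ρ ^ (n - 2) := by
      have := mul_lt_mul_of_pos_left hRc hn₀
      rwa [hρn, show (n : ℝ) * (ρ ^ (n - 2) - ρ ^ (n - 2) * ρ ^ 2) = 2 * ρ ^ (n - 2) by
        linear_combination -ρ ^ (n - 2) * hsq] at this
    exact neg_of_mul_neg_right (by linarith) hn₀.le
  obtain ⟨y, hy, hfy⟩ := exists_mem_Ioo_eq_zero_of_mul_neg (f := f) (critPoint_pos hn).le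
    (by fun_prop) (by rw [hf₀]; nlinarith)
  exact (hξ y hy.1 hfy).trans_lt hy.2

end LensEquation

theorem stmt_11_general (n : ℕ) (hn : 3 ≤ n) (r : ℝ) (hr : 0 < r)
    (hrc : r < ((((n : ℝ) - 2) / n) ^ (((n : ℝ) - 2) / 2) -
          (((n : ℝ) - 2) / n) ^ ((n : ℝ) / 2)) ^ ((1 : ℝ) / n))
    (ξ₁ : ℝ) (hξ₁pos : 0 < ξ₁)
    (hξ₁min : ∀ x : ℝ, 0 < x →
      ((n : ℝ) + 2) * x ^ n - (n : ℝ) * x ^ (n - 2) + 2 * r ^ n = 0 → ξ₁ ≤ x)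
    (ε : ℝ) (hε0 : 0 < ε)
    (hεlt : ε < (ξ₁ ^ (n + 2) - ξ₁ ^ n + r ^ n * ξ₁ ^ 2) / r ^ n) :
    {z : ℂ | z ≠ 0 ∧ z ^ n ≠ (r : ℂ) ^ n ∧
      (z ^ n - (ε : ℂ) * (r : ℂ) ^ n) / (z * (z ^ n - (r : ℂ) ^ n)) =
        (starRingEnd ℂ) z}.ncard = 5 * n := by
  open LensEquation in
  have hn₂ : 2 < n := by omega
  have hR : 0 < r ^ n := pow_pos hr n
  have hRc : r ^ n < critPoint n ^ (n - 2) - critPoint n ^ n := by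
    rw [← critRadius_pow hn₂]; exact pow_lt_pow_left₀ hrc hr.le (by omega)
  have hξ₁ρ : ξ₁ < critPoint n := lt_critPoint_of_forall_le hn₂ hR hRc hξ₁min
  have hεξ₁ : ε * r ^ n < ξ₁ ^ (n + 2) - ξ₁ ^ n + r ^ n * ξ₁ ^ 2 := (lt_div_iff₀ hR).1 hεlt
  have hε₁ : ε < 1 := by
    have hξ₁ : ξ₁ ^ 2 < 1 := by nlinarith [hξ₁ρ.trans (critPoint_lt_one hn₂)]
    have : ξ₁ ^ (n + 2) - ξ₁ ^ n = ξ₁ ^ n * (ξ₁ ^ 2 - 1) := by ring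
    nlinarith [pow_pos hξ₁pos n]
  have hP := ncard_posRoots_radiusPolyPos hn₂ hR hε0 hε₁
  have hQ := ncard_posRoots_radiusPolyNeg hn₂ hR hε0 hε₁ hξ₁pos hξ₁ρ (critPoint_lt_one hn₂)
    hRc hεξ₁
  change (lensSolutions n r ε).ncard = 5 * n
  rw [ncard_lensSolutions (by omega) hr.ne' hε₁.ne (finite_of_ncard_ne_zero (by omega))
    (finite_of_ncard_ne_zero (by omega)), hP, hQ, mul_comm]

/-- For `n ≥ 3`, `0 < r < r_crit`, `ξ₁` the smallest positive root of
`(n+2)ξ^n − nξ^(n−2) + 2r^n` and `0 < ε < ε*`, the equation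
`(z^n − εr^n)/(z(z^n − r^n)) = conj z` has exactly `5n` solutions. -/
theorem stmt_11 (n : ℕ) (hn : 3 ≤ n) (r : ℝ) (hr : 0 < r)
    (hrc : r < ((((n : ℝ) - 2) / n) ^ (((n : ℝ) - 2) / 2) -
          (((n : ℝ) - 2) / n) ^ ((n : ℝ) / 2)) ^ ((1 : ℝ) / n))
    (ξ₁ : ℝ) (hξ₁pos : 0 < ξ₁)
    (hξ₁root : ((n : ℝ) + 2) * ξ₁ ^ n - (n : ℝ) * ξ₁ ^ (n - 2) + 2 * r ^ n = 0)
    (hξ₁min : ∀ x : ℝ, 0 < x →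
      ((n : ℝ) + 2) * x ^ n - (n : ℝ) * x ^ (n - 2) + 2 * r ^ n = 0 → ξ₁ ≤ x)
    (ε : ℝ) (hε0 : 0 < ε)
    (hεlt : ε < (ξ₁ ^ (n + 2) - ξ₁ ^ n + r ^ n * ξ₁ ^ 2) / r ^ n) :
    {z : ℂ | z ≠ 0 ∧ z ^ n ≠ (r : ℂ) ^ n ∧
      (z ^ n - (ε : ℂ) * (r : ℂ) ^ n) / (z * (z ^ n - (r : ℂ) ^ n)) =
        (starRingEnd ℂ) z}.ncard = 5 * n :=
  stmt_11_general n hn r hr hrc ξ₁ hξ₁pos hξ₁min ε hε0 hεlt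
end

section
/- For every integer n ≥ 3 and every real r with 0 < r < r_crit, the inequality ((n+6)/(n+8)) · r^((3n+1)/(3n−6)) < ((n−2)/(n+2))^(1/2) holds, where r_crit = ((n−2)/n)^(1/2) (2/(n−2))^(1/n). -/
/-!
Write `r_crit = √((n-2)/n) · t` with `t = (2/(n-2))^(1/n)`. Since `r_crit < 1` and the exponent
`p = (3n+1)/(3n-6)` exceeds `1`, `r^p < r_crit^p ≤ r_crit^k` for any natural `k ≤ p`. Bounding
`t` by a rational `b` with `2/(n-2) ≤ bⁿ` then turns the claim into a polynomial inequality in `n`. For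
`n ≥ 6` the choice `k = 1`, `b = 1` works; the three small cases need `k = 2` (`n = 3, 4`) or a
sharper `b` (`n = 3, 5`).
-/

open Real

noncomputable def criticalRadius (x : ℝ) : ℝ :=
  √((x - 2) / x) * (2 / (x - 2)) ^ ((1 : ℝ) / x)

lemma criticalRadius_pos {x : ℝ} (hx : 2 < x) : 0 < criticalRadius x := by
  unfold criticalRadius
  have : 0 < x - 2 := by linarith
  positivity

lemma criticalRadius_le_mul {n : ℕ} (hn : 3 ≤ n) {b : ℝ} (hb : 0 ≤ b)
    (hbn : 2 / ((n : ℝ) - 2) ≤ b ^ n) : criticalRadius n ≤ √(((n : ℝ) - 2) / n) * b := by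
  have hn' : (3 : ℝ) ≤ n := by exact_mod_cast hn
  refine mul_le_mul_of_nonneg_left ?_ (sqrt_nonneg _)
  rw [one_div, rpow_inv_le_iff_of_pos (div_nonneg zero_le_two (by linarith)) hb (by linarith),
    rpow_natCast]
  exact hbn

lemma mul_rpow_criticalRadius_le_sqrt {n : ℕ} (hn : 3 ≤ n) {a b p q : ℝ} (k : ℕ) (ha : 0 ≤ a)
    (hb : 0 ≤ b) (hbn : 2 / ((n : ℝ) - 2) ≤ b ^ n) (hkp : (k : ℝ) ≤ p)
    (hsb : ((n : ℝ) - 2) / n * b ^ 2 ≤ 1)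
    (hq : a ^ 2 * (((n : ℝ) - 2) / n) ^ k * b ^ (2 * k) ≤ q) :
    a * criticalRadius n ^ p ≤ √q := by
  have hn' : (3 : ℝ) ≤ n := by exact_mod_cast hn
  set s := √(((n : ℝ) - 2) / n)
  have hs2 : s ^ 2 = ((n : ℝ) - 2) / n := sq_sqrt (div_nonneg (by linarith) (by linarith))
  have hc0 := criticalRadius_pos (x := n) (by linarith)
  have hcsb : criticalRadius n ≤ s * b := criticalRadius_le_mul hn hb hbn
  have hsb1 : s * b ≤ 1 := by
    refine (sq_le_one_iff₀ (by positivity)).mp ?_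
    rwa [mul_pow, hs2]
  have hcp : criticalRadius n ^ p ≤ (s * b) ^ k := by
    calc criticalRadius n ^ p ≤ criticalRadius n ^ (k : ℝ) :=
          rpow_le_rpow_of_exponent_ge hc0 (hcsb.trans hsb1) hkp
      _ = criticalRadius n ^ k := rpow_natCast _ _
      _ ≤ (s * b) ^ k := pow_le_pow_left₀ hc0.le hcsb k
  refine (mul_le_mul_of_nonneg_left hcp ha).trans ?_
  have hsq : (a * (s * b) ^ k) ^ 2 ≤ q := by
    calc (a * (s * b) ^ k) ^ 2 = a ^ 2 * (s ^ 2) ^ k * b ^ (2 * k) := by ring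
      _ ≤ q := by rw [hs2]; exact hq
  rwa [le_sqrt (by positivity) (hsq.trans' (by positivity))]

lemma mul_rpow_criticalRadius_le {n : ℕ} (hn : 3 ≤ n) :
    ((n : ℝ) + 6) / ((n : ℝ) + 8) * criticalRadius n ^ ((3 * (n : ℝ) + 1) / (3 * (n : ℝ) - 6)) ≤
      √(((n : ℝ) - 2) / ((n : ℝ) + 2)) := by
  obtain rfl | rfl | rfl | h6 : n = 3 ∨ n = 4 ∨ n = 5 ∨ 6 ≤ n := by omega
  · exact mul_rpow_criticalRadius_le_sqrt le_rfl (b := 63 / 50) 2 (by norm_num) (by norm_num)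
      (by norm_num) (by norm_num) (by norm_num) (by norm_num)
  · exact mul_rpow_criticalRadius_le_sqrt (by norm_num) (b := 1) 2 (by norm_num) (by norm_num)
      (by norm_num) (by norm_num) (by norm_num) (by norm_num)
  · exact mul_rpow_criticalRadius_le_sqrt (by norm_num) (b := 19 / 20) 1 (by norm_num)
      (by norm_num) (by norm_num) (by norm_num) (by norm_num) (by norm_num)
  have hn6 : (6 : ℝ) ≤ n := by exact_mod_cast h6
  refine mul_rpow_criticalRadius_le_sqrt hn (b := 1) 1 (by positivity) zero_le_one ?_ ?_ ?_ ?_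
  · rw [one_pow, div_le_one (by linarith)]; linarith
  · rw [Nat.cast_one, le_div_iff₀ (by linarith)]; linarith
  · rw [one_pow, mul_one, div_le_one (by positivity)]; linarith
  · rw [one_pow, mul_one, pow_one, div_pow, div_mul_div_comm,
      div_le_div_iff₀ (by positivity) (by positivity)]
    have : 0 ≤ ((n : ℝ) - 2) * (2 * n ^ 2 + 4 * n - 72) := mul_nonneg (by linarith) (by nlinarith)
    linarith

/-- For every integer `n ≥ 3` and `0 < r < r_crit = ((n−2)/n)^(1/2)(2/(n−2))^(1/n)`,
the inequality `((n+6)/(n+8)) r^((3n+1)/(3n−6)) < ((n−2)/(n+2))^(1/2)` holds. -/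
theorem stmt_18 (n : ℕ) (hn : 3 ≤ n) (r : ℝ) (hr : 0 < r)
    (hrc : r < Real.sqrt (((n : ℝ) - 2) / n) * (2 / ((n : ℝ) - 2)) ^ ((1 : ℝ) / n)) :
    ((n : ℝ) + 6) / ((n : ℝ) + 8) *
        r ^ ((3 * (n : ℝ) + 1) / (3 * (n : ℝ) - 6)) <
      Real.sqrt (((n : ℝ) - 2) / ((n : ℝ) + 2)) := by
  have hn' : (3 : ℝ) ≤ n := by exact_mod_cast hn
  refine lt_of_lt_of_le ?_ (mul_rpow_criticalRadius_le hn)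
  have hp : 0 < (3 * (n : ℝ) + 1) / (3 * (n : ℝ) - 6) := div_pos (by linarith) (by linarith)
  exact mul_lt_mul_of_pos_left (rpow_lt_rpow hr.le hrc hp) (by positivity)
end
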